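/- arXiv:2407.18694 — 4 statements merged into one kernel-verified Lean document; each statement's English description precedes it below -/
import Mathlib

section
/- Let (W,S) be a Coxeter group of a finite root system Φ with simple roots Δ, σ an automorphism of the based root system, and c = s_{α_1}···s_{α_r} a σ-Coxeter element where {α_1,...,α_r} is a set of representatives of the σ-orbits on Δ. For any cσ-orbit C ⊆ Φ, the support supp(C) = ∪_{γ∈C} supp(γ) ⊆ Δ is σ-stable. -/
open Classical in
/-- Two indices are in the same orbit of the permutation `σ`. -/
def SameOrbit {B : Type*} (σ : Equiv.Perm B) (i j : B) : Prop :=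
  ∃ n : ℤ, (σ ^ n) i = j

open Classical in
/-- For a finite root system `Φ` with simple roots `Δ = {b i}` (a basis of the
ambient space), a diagram automorphism `σ` and a `σ`-Coxeter element
`c = s_{α_1} ⋯ s_{α_r}` (where the letters of the reduced word `l` hit each `σ`-orbit of
simple roots exactly once), the support `supp C = ⋃_{γ ∈ C} supp γ` of any `cσ`-orbit
`C ⊆ Φ` is `σ`-stable.  Here `supp α ⊆ Δ` is the set of simple roots occurring with nonzero
coefficient in `α`. -/
theorem stmt0 {V : Type*} [AddCommGroup V] [Module ℚ V]
    {B : Type*} [Fintype B]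
    (b : Module.Basis B ℚ V) (coroot : B → Module.Dual ℚ V)
    (h2 : ∀ i, coroot i (b i) = 2)
    (Φ : Set V) (hΦfin : Φ.Finite)
    (hΔΦ : ∀ i, b i ∈ Φ)
    (hrefl : ∀ i, ∀ α ∈ Φ, Module.reflection (h2 i) α ∈ Φ)
    (σB : Equiv.Perm B) (σV : V ≃ₗ[ℚ] V)
    (hσ : ∀ i, σV (b i) = b (σB i))
    (hσΦ : ∀ α ∈ Φ, σV α ∈ Φ)
    -- the σ-Coxeter element c, given by a reduced word l meeting every σ-orbit exactly once
    (l : List B)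
    (hone : ∀ j : B, (l.countP (fun i => decide (SameOrbit σB i j))) = 1)
    (c : V ≃ₗ[ℚ] V)
    (hc : c = (l.map (fun i => Module.reflection (h2 i))).prod)
    -- cσ as a linear automorphism (first σ, then c)
    (cσ : V ≃ₗ[ℚ] V) (hcσ : cσ = σV.trans c)
    -- C is a cσ-orbit in Φ
    (C : Set V) (γ : V) (hγ : γ ∈ Φ)
    (hC : C = {v | ∃ n : ℤ, (cσ ^ n) γ = v})
    -- the support of C
    (suppC : Set B)
    (hsupp : suppC = ⋃ α ∈ C, ((b.repr α).support : Set B)) :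
    ∀ i ∈ suppC, σB i ∈ suppC := by
  classical
  -- Step 1: reflections from the word `l` don't change coordinates outside `l`.
  have reflLemma : ∀ (L : List B) (v : V) (j : B), j ∉ L →
      b.repr ((L.map (fun i => Module.reflection (h2 i))).prod v) j = b.repr v j := by
    intro L
    induction L with
    | nil => intro v j _; simp
    | cons a t ih =>
      intro v j hj
      have hja : a ≠ j := fun h => hj (h ▸ List.mem_cons_self)
      have hjt : j ∉ t := fun h => hj (List.mem_cons_of_mem a h)
      have : ((((a :: t).map (fun i => Module.reflection (h2 i))).prod) v)
          = Module.reflection (h2 a) (((t.map (fun i => Module.reflection (h2 i))).prod) v) := by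
        rw [List.map_cons, List.prod_cons]; rfl
      rw [this, Module.reflection_apply, map_sub, map_smul]
      simp [Finsupp.single_apply, hja, ih v j hjt]
  have creplemma : ∀ (v : V) (j : B), j ∉ l → b.repr (c v) j = b.repr v j := by
    intro v j hj; rw [hc]; exact reflLemma l v j hj
  have cinvlemma : ∀ (v : V) (j : B), j ∉ l → b.repr (c.symm v) j = b.repr v j := by
    intro v j hj
    have := creplemma (c.symm v) j hj
    rw [c.apply_symm_apply] at this
    exact this.symm
  -- Step 2: σV permutes coordinates by σB.
  have reprσ : ∀ (v : V) (j : B), b.repr (σV v) (σB j) = b.repr v j := by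
    have key : (b.repr.toLinearMap ∘ₗ (σV : V →ₗ[ℚ] V)) =
        ((Finsupp.domLCongr σB : (B →₀ ℚ) ≃ₗ[ℚ] (B →₀ ℚ)) : (B →₀ ℚ) →ₗ[ℚ] (B →₀ ℚ))
          ∘ₗ b.repr.toLinearMap := by
      apply b.ext
      intro i
      simp [hσ]
    intro v j
    have h1 : b.repr (σV v) = Finsupp.equivMapDomain σB (b.repr v) := by
      have := DFunLike.congr_fun key v
      simpa using this
    rw [h1]
    simp [Finsupp.equivMapDomain_apply]
  have reprσinv : ∀ (v : V) (j : B), b.repr (σV.symm v) (σB.symm j) = b.repr v j := by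
    intro v j
    have := reprσ (σV.symm v) (σB.symm j)
    rw [σV.apply_symm_apply, σB.apply_symm_apply] at this
    exact this.symm
  -- membership characterization
  have hmem : ∀ j : B, j ∈ suppC ↔ ∃ n : ℤ, b.repr ((cσ ^ n) γ) j ≠ 0 := by
    intro j
    rw [hsupp]
    simp only [Set.mem_iUnion, Finset.coe_sort_coe, Finset.mem_coe, Finsupp.mem_support_iff, hC,
      Set.mem_setOf_eq]
    constructor
    · rintro ⟨α, ⟨n, hn⟩, h⟩; exact ⟨n, hn ▸ h⟩
    · rintro ⟨n, h⟩; exact ⟨_, ⟨n, rfl⟩, h⟩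
  have happ : ∀ v : V, cσ v = c (σV v) := fun v => by rw [hcσ]; rfl
  have happinv : ∀ v : V, cσ.symm v = σV.symm (c.symm v) := fun v => by rw [hcσ]; rfl
  -- Rule A: apply cσ
  have ruleA : ∀ j : B, (∃ n : ℤ, b.repr ((cσ ^ n) γ) j ≠ 0) → σB j ∉ l →
      ∃ n : ℤ, b.repr ((cσ ^ n) γ) (σB j) ≠ 0 := by
    rintro j ⟨n, hn⟩ hnl
    refine ⟨1 + n, ?_⟩
    have h1 : (cσ ^ (1 + n)) γ = cσ ((cσ ^ n) γ) := by
      rw [zpow_add, zpow_one]; rfl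
    rw [h1, happ, creplemma _ _ hnl, reprσ]
    exact hn
  -- Rule B: apply cσ⁻¹
  have ruleB : ∀ j : B, (∃ n : ℤ, b.repr ((cσ ^ n) γ) j ≠ 0) → j ∉ l →
      ∃ n : ℤ, b.repr ((cσ ^ n) γ) (σB.symm j) ≠ 0 := by
    rintro j ⟨n, hn⟩ hnl
    refine ⟨-1 + n, ?_⟩
    have h1 : (cσ ^ (-1 + n)) γ = cσ.symm ((cσ ^ n) γ) := by
      rw [zpow_add, zpow_neg_one]; rfl
    rw [h1, happinv, reprσinv, cinvlemma _ _ hnl]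
    exact hn
  -- uniqueness of letters within a σ-orbit
  have uniq : ∀ w w' : B, w ∈ l → w' ∈ l → SameOrbit σB w w' → w = w' := by
    intro w w' hw hw' horb
    have h1 := hone w'
    rw [List.countP_eq_length_filter] at h1
    obtain ⟨a, ha⟩ := List.length_eq_one_iff.mp h1
    have hwf : w ∈ l.filter (fun i => decide (SameOrbit σB i w')) :=
      List.mem_filter.mpr ⟨hw, by simpa using horb⟩
    have hw'f : w' ∈ l.filter (fun i => decide (SameOrbit σB i w')) :=
      List.mem_filter.mpr ⟨hw', by simp; exact ⟨0, rfl⟩⟩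
    rw [ha, List.mem_singleton] at hwf hw'f
    rw [hwf, hw'f]
  -- main argument
  intro i hi
  rw [hmem] at hi
  rw [hmem]
  by_cases hL : σB i ∈ l
  · -- walk backwards around the σ-orbit of i
    have hfin : ∃ m : ℕ, 0 < m ∧ (σB ^ m) i = i :=
      ⟨orderOf σB, orderOf_pos σB, by rw [pow_orderOf_eq_one]; rfl⟩
    set m := Nat.find hfin with hmdef
    obtain ⟨hm0, hmfix⟩ := Nat.find_spec hfin
    have claim : ∀ k : ℕ, k ≤ m - 1 → ∃ n : ℤ, b.repr ((cσ ^ n) γ) ((σB ^ (-(k : ℤ))) i) ≠ 0 := by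
      intro k
      induction k with
      | zero => intro _; simpa using hi
      | succ k ih =>
        intro hk
        have hk' : k ≤ m - 1 := le_trans (Nat.le_succ k) hk
        have hcur := ih hk'
        have hwl : (σB ^ (-(k : ℤ))) i ∉ l := by
          intro hwl
          have horb : SameOrbit σB ((σB ^ (-(k : ℤ))) i) (σB i) := by
            refine ⟨(k : ℤ) + 1, ?_⟩
            rw [← Equiv.Perm.mul_apply, ← zpow_add]
            have : (k : ℤ) + 1 + -(k : ℤ) = 1 := by ring
            rw [this, zpow_one]
          have heq := uniq _ _ hwl hL horb
          -- From σ^(-k) i = σ i we get σ^(k+1) i = i, contradicting minimality of m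
          have hfixed : (σB ^ (k + 1)) i = i := by
            have := congrArg (fun x => (σB ^ ((k : ℤ) + 1)) x) heq
            rw [← Equiv.Perm.mul_apply, ← zpow_add] at this
            have h3 : (k : ℤ) + 1 + -(k : ℤ) = 1 := by ring
            rw [h3, zpow_one] at this
            have h4 : (σB ^ ((k : ℤ) + 1)) (σB i) = (σB ^ (k + 2)) i := by
              rw [← Equiv.Perm.mul_apply]
              have : σB ^ ((k : ℤ) + 1) * σB ^ (1 : ℤ) = σB ^ ((k : ℤ) + 2) := by
                rw [← zpow_add]; ring_nf
              rw [zpow_one] at this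
              rw [this]
              norm_cast
            rw [h4] at this
            -- this : σB i = σ^(k+2) i, so σ^(k+1) i = i
            have := congrArg (fun x => σB.symm x) this
            simp only [Equiv.symm_apply_apply] at this
            rw [show k + 2 = 1 + (k + 1) by ring, pow_add, pow_one, Equiv.Perm.mul_apply,
              Equiv.symm_apply_apply] at this
            exact this.symm
          have hlt : k + 1 < m := by omega
          exact Nat.find_min hfin hlt ⟨Nat.succ_pos k, hfixed⟩
        have := ruleB _ hcur hwl
        have heq2 : σB.symm ((σB ^ (-(k : ℤ))) i) = (σB ^ (-((k + 1 : ℕ) : ℤ))) i := by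
          have : σB.symm = σB ^ (-1 : ℤ) := by rw [zpow_neg_one]; rfl
          rw [this, ← Equiv.Perm.mul_apply, ← zpow_add]
          congr 1
          push_cast
          ring
        rwa [heq2] at this
    have hfinal : (σB ^ (-((m - 1 : ℕ) : ℤ))) i = σB i := by
      have h5 : (σB ^ ((m : ℕ) : ℤ)) i = i := by
        rw [zpow_natCast]; exact hmfix
      calc (σB ^ (-((m - 1 : ℕ) : ℤ))) i = (σB ^ (-((m - 1 : ℕ) : ℤ))) ((σB ^ ((m : ℕ) : ℤ)) i) := by
            rw [h5]
        _ = (σB ^ (-((m - 1 : ℕ) : ℤ) + (m : ℕ))) i := by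
            rw [← Equiv.Perm.mul_apply, ← zpow_add]
        _ = σB i := by
            have : -((m - 1 : ℕ) : ℤ) + (m : ℕ) = 1 := by
              have : ((m - 1 : ℕ) : ℤ) = (m : ℤ) - 1 := by
                omega
              omega
            rw [this, zpow_one]
    have := claim (m - 1) le_rfl
    rwa [hfinal] at this
  · exact ruleA i hi hL
end

section
/- Let W_e be a finite Coxeter group with simple system Δ_e, length function ℓ_e, and diagram automorphism σ_I, and let c_I be a σ_I-Coxeter element such that there exists N with (c_I σ_I)^N = w_e σ_I^N and N ℓ_e(c_I) = ℓ_e(w_e) (w_e the longest element). Suppose v ∈ W_e satisfies v ≤ c_I in Bruhat order and vσ_I ∈ ⟨c_I σ_I⟩ (the cyclic group generated by c_I σ_I). If moreover σ_I ≠ 1, or v ≠ 1, then v = c_I. -/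
open CoxeterSystem List

namespace Stmt9Aux

variable {B : Type*} {W : Type*} [Group W] {M : CoxeterMatrix B} (cs : CoxeterSystem M W)

local prefix:100 "s" => cs.simple
local prefix:100 "π" => cs.wordProd
local prefix:100 "ℓ" => cs.length

/-- The underlying type of Bourbaki's sign representation: reflections times `ZMod 2`. -/
abbrev ReflSgn := {t : W // cs.IsReflection t} × ZMod 2

open Classical in
/-- The function underlying the action of a simple reflection on `ReflSgn`. -/
noncomputable def etaFun (i : B) (x : ReflSgn cs) : ReflSgn cs :=
  (⟨s i * x.1.1 * s i, by
      have := x.1.2.conj (s i)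
      rwa [cs.inv_simple] at this⟩,
    x.2 + if x.1.1 = s i then 1 else 0)

lemma etaFun_involutive (i : B) : Function.Involutive (etaFun cs i) := by
  classical
  rintro ⟨⟨t, ht⟩, ε⟩
  have h1 : s i * (s i * t * s i) * s i = t := by
    simp [mul_assoc, cs.simple_mul_simple_cancel_left]
  have h2 : (s i * t * s i = s i) ↔ (t = s i) := by
    constructor
    · intro h
      have := congrArg (fun a => s i * a * s i) h
      simpa [mul_assoc, cs.simple_mul_simple_cancel_left,
        cs.simple_mul_simple_cancel_right, cs.simple_mul_simple_self] using this
    · intro h; rw [h]; simp [cs.simple_mul_simple_cancel_right]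
  apply Prod.ext
  · exact Subtype.ext h1
  · show ε + (if t = s i then (1 : ZMod 2) else 0)
        + (if s i * t * s i = s i then (1 : ZMod 2) else 0) = ε
    by_cases h : t = s i
    · rw [if_pos h, if_pos (h2.mpr h), add_assoc,
        show (1 : ZMod 2) + 1 = 0 by decide, add_zero]
    · rw [if_neg h, if_neg (fun hc => h (h2.mp hc)), add_zero, add_zero]

/-- The action of a simple reflection on `ReflSgn`. -/
noncomputable def eta (i : B) : Equiv.Perm (ReflSgn cs) := (etaFun_involutive cs i).toPerm

lemma eta_apply (i : B) (x : ReflSgn cs) : eta cs i x = etaFun cs i x := rfl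


section Braid

variable (i j : B)

/-- `s j * (s j * s i)^k * s j = ((s j * s i)^k)⁻¹`. -/
lemma sj_zpow_sj (k : ℕ) :
    s j * (s j * s i) ^ k * s j = ((s j * s i) ^ k)⁻¹ := by
  induction k with
  | zero => simp [cs.simple_mul_simple_self]
  | succ k ih =>
    have : s j * (s j * s i) ^ (k + 1) * s j
        = (s j * (s j * s i) ^ k * s j) * (s j * (s j * s i) * s j) := by
      rw [pow_succ]
      simp [mul_assoc, cs.simple_mul_simple_cancel_left]
    rw [this, ih]
    have h2 : s j * (s j * s i) * s j = (s j * s i)⁻¹ := by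
      rw [mul_inv_rev, cs.inv_simple, cs.inv_simple]
      simp [mul_assoc, cs.simple_mul_simple_cancel_left]
    rw [h2, ← mul_inv_rev, ← pow_succ']

lemma sj_zpow_inv (k : ℕ) :
    s j * ((s j * s i) ^ k)⁻¹ = (s j * s i) ^ k * s j := by
  rw [← sj_zpow_sj cs i j k]
  simp [mul_assoc, cs.simple_mul_simple_cancel_left, cs.simple_mul_simple_cancel_right]

open Classical in
lemma eta_mul_pow_apply (k : ℕ) (t : {t : W // cs.IsReflection t}) (ε : ZMod 2) :
    ((eta cs i * eta cs j) ^ k) (t, ε) =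
      (⟨((s j * s i) ^ k)⁻¹ * t.1 * (s j * s i) ^ k, by
          have := t.2.conj ((s j * s i) ^ k)⁻¹
          simpa using this⟩,
        ε + ∑ r ∈ Finset.range (2 * k),
          (if t.1 = (s j * s i) ^ r * s j then 1 else 0)) := by
  induction k with
  | zero =>
    simp only [pow_zero, Equiv.Perm.coe_one, id_eq, Nat.mul_zero, Finset.range_zero,
      Finset.sum_empty, add_zero]
    apply Prod.ext
    · apply Subtype.ext
      simp
    · simp
  | succ k ih =>
    rw [pow_succ', Equiv.Perm.mul_apply, ih]
    set z := s j * s i with hz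
    rw [Equiv.Perm.mul_apply, eta_apply, eta_apply]
    apply Prod.ext
    · apply Subtype.ext
      show s i * (s j * ((z ^ k)⁻¹ * t.1 * z ^ k) * s j) * s i
          = (z ^ (k + 1))⁻¹ * t.1 * z ^ (k + 1)
      have hsi : s i * s j = z⁻¹ := by rw [hz, mul_inv_rev, cs.inv_simple, cs.inv_simple]
      calc s i * (s j * ((z ^ k)⁻¹ * t.1 * z ^ k) * s j) * s i
          = (s i * s j) * ((z ^ k)⁻¹ * t.1 * z ^ k) * (s j * s i) := by
            simp [mul_assoc]
        _ = z⁻¹ * ((z ^ k)⁻¹ * t.1 * z ^ k) * z := by rw [hsi, hz]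
        _ = (z ^ (k + 1))⁻¹ * t.1 * z ^ (k + 1) := by
            rw [pow_succ']
            group
    · show (ε + ∑ r ∈ Finset.range (2 * k),
            (if t.1 = z ^ r * s j then (1 : ZMod 2) else 0))
          + (if (z ^ k)⁻¹ * t.1 * z ^ k = s j then 1 else 0)
          + (if s j * ((z ^ k)⁻¹ * t.1 * z ^ k) * s j = s i then 1 else 0)
          = ε + ∑ r ∈ Finset.range (2 * (k + 1)),
            (if t.1 = z ^ r * s j then 1 else 0)
      have hA : ∀ b : W, ((z ^ k)⁻¹ * t.1 * z ^ k = b) ↔ (t.1 = z ^ k * b * (z ^ k)⁻¹) := by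
        intro b
        constructor
        · intro h; rw [← h]; group
        · intro h; rw [h]; group
      have hsw : ∀ m : ℕ, s j * (z ^ m)⁻¹ = z ^ m * s j := by
        intro m; rw [hz]; exact sj_zpow_inv cs i j m
      have hc1 : ((z ^ k)⁻¹ * t.1 * z ^ k = s j) ↔ (t.1 = z ^ (2 * k) * s j) := by
        rw [hA]
        have h : z ^ k * s j * (z ^ k)⁻¹ = z ^ (2 * k) * s j := by
          rw [mul_assoc, hsw k, ← mul_assoc, ← pow_add, two_mul]
        rw [h]
      have hc2 : (s j * ((z ^ k)⁻¹ * t.1 * z ^ k) * s j = s i)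
          ↔ (t.1 = z ^ (2 * k + 1) * s j) := by
        have e1 : (s j * ((z ^ k)⁻¹ * t.1 * z ^ k) * s j = s i)
            ↔ ((z ^ k)⁻¹ * t.1 * z ^ k = s j * s i * s j) := by
          constructor
          · intro h
            rw [← h]
            simp [mul_assoc, cs.simple_mul_simple_cancel_left, cs.simple_mul_simple_self]
          · intro h
            rw [h]
            simp [mul_assoc, cs.simple_mul_simple_cancel_left, cs.simple_mul_simple_self]
        rw [e1, hA]
        have h : z ^ k * (s j * s i * s j) * (z ^ k)⁻¹ = z ^ (2 * k + 1) * s j := by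
          rw [show s j * s i * s j = z * s j from by rw [hz]]
          rw [show z ^ k * (z * s j) * (z ^ k)⁻¹ = z ^ (k + 1) * (s j * (z ^ k)⁻¹) from by
            rw [pow_succ]; group]
          rw [hsw k, ← mul_assoc, ← pow_add]
          rw [show k + 1 + k = 2 * k + 1 from by omega]
        rw [h]
      rw [if_congr hc1 rfl rfl, if_congr hc2 rfl rfl]
      rw [show 2 * (k + 1) = (2 * k + 1) + 1 from by omega,
        Finset.sum_range_succ, Finset.sum_range_succ]
      ring

open Classical in
lemma eta_braid : ((eta cs i) * (eta cs j)) ^ M i j = 1 := by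
  apply Equiv.ext
  rintro ⟨t, ε⟩
  rw [eta_mul_pow_apply, Equiv.Perm.one_apply]
  have hz : (s j * s i) ^ M i j = 1 := cs.simple_mul_simple_pow' i j
  apply Prod.ext
  · apply Subtype.ext
    show (((s j * s i) ^ M i j)⁻¹ * t.1 * (s j * s i) ^ M i j) = t.1
    rw [hz]
    simp
  · show ε + ∑ r ∈ Finset.range (2 * M i j),
        (if t.1 = (s j * s i) ^ r * s j then (1 : ZMod 2) else 0) = ε
    rw [two_mul, Finset.sum_range_add]
    have h : ∀ r, (if t.1 = (s j * s i) ^ (M i j + r) * s j then (1 : ZMod 2) else 0)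
        = (if t.1 = (s j * s i) ^ r * s j then 1 else 0) := by
      intro r
      rw [pow_add, hz, one_mul]
    rw [Finset.sum_congr rfl (fun r _ => h r), ← two_mul]
    rw [show ∀ a : ZMod 2, 2 * a = 0 from by decide, add_zero]

end Braid

section Rep

/-- Bourbaki's sign representation of the Coxeter group. -/
noncomputable def phi : W →* Equiv.Perm (ReflSgn cs) :=
  cs.lift ⟨fun i => eta cs i, fun i i' => eta_braid cs i i'⟩

lemma phi_simple (i : B) : phi cs (s i) = eta cs i :=
  cs.lift_apply_simple _ i

/-- The sign bit of the action of `w` on a reflection `t`. -/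
noncomputable def bitW (w : W) (t : {t : W // cs.IsReflection t}) : ZMod 2 :=
  (phi cs w (t, 0)).2

open Classical in
lemma phi_apply (w : W) (t : {t : W // cs.IsReflection t}) (ε : ZMod 2) :
    phi cs w (t, ε) = (⟨w * t.1 * w⁻¹, t.2.conj w⟩, ε + bitW cs w t) := by
  induction w using cs.simple_induction_left generalizing ε with
  | one =>
    apply Prod.ext
    · apply Subtype.ext
      simp
    · show ((phi cs 1) (t, ε)).2 = ε + bitW cs 1 t
      unfold bitW
      rw [map_one]
      simp
  | mul_simple_left w i hw =>
    have hb : ∀ δ : ZMod 2, phi cs (s i * w) (t, δ)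
        = (⟨s i * (w * t.1 * w⁻¹) * s i, by
            have := (t.2.conj w).conj (s i)
            rwa [cs.inv_simple] at this⟩,
          δ + bitW cs w t + (if w * t.1 * w⁻¹ = s i then 1 else 0)) := by
      intro δ
      rw [map_mul, Equiv.Perm.mul_apply, phi_simple, hw δ, eta_apply]
      apply Prod.ext
      · apply Subtype.ext
        rfl
      · rfl
    have hbit : bitW cs (s i * w) t = bitW cs w t + (if w * t.1 * w⁻¹ = s i then 1 else 0) := by
      unfold bitW
      rw [hb 0]
      show (0 : ZMod 2) + bitW cs w t + _ = _
      rw [zero_add]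
      rfl
    rw [hb ε, hbit]
    apply Prod.ext
    · apply Subtype.ext
      show s i * (w * t.1 * w⁻¹) * s i = (s i * w) * t.1 * (s i * w)⁻¹
      rw [mul_inv_rev, cs.inv_simple]
      group
    · show ε + bitW cs w t + _ = ε + _
      rw [add_assoc]

end Rep


section Exchange

open Classical in
/-- Number of occurrences (mod 2) of `t` in a list, as an element of `ZMod 2`. -/
noncomputable def bitSum (t : W) (L : List W) : ZMod 2 :=
  (L.map (fun u => if t = u then 1 else 0)).sum

open Classical in
lemma bitSum_eq_zero {t : W} {L : List W} (h : t ∉ L) : bitSum t L = 0 := by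
  apply List.sum_eq_zero
  intro x hx
  obtain ⟨u, hu, rfl⟩ := List.mem_map.mp hx
  rw [if_neg (fun he => h (by rw [he]; exact hu))]

open Classical in
lemma mem_of_bitSum_ne_zero {t : W} {L : List W} (h : bitSum t L ≠ 0) : t ∈ L := by
  by_contra hc
  exact h (bitSum_eq_zero hc)

open Classical in
lemma bitW_wordProd (ω : List B) (t : {t : W // cs.IsReflection t}) :
    bitW cs (π ω) t = bitSum t.1 (cs.rightInvSeq ω) := by
  induction ω with
  | nil =>
    show bitW cs (π []) t = bitSum t.1 []
    rw [cs.wordProd_nil]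
    show ((phi cs) 1 (t, 0)).2 = _
    rw [map_one]
    rfl
  | cons i ω ih =>
    have hris : cs.rightInvSeq (i :: ω) = ((π ω)⁻¹ * s i * π ω) :: cs.rightInvSeq ω := rfl
    have hcond : (π ω * t.1 * (π ω)⁻¹ = s i) ↔ (t.1 = (π ω)⁻¹ * s i * π ω) := by
      constructor
      · intro h; rw [← h]; group
      · intro h; rw [h]; group
    rw [hris, cs.wordProd_cons]
    show ((phi cs) (s i * π ω) (t, 0)).2 = _
    rw [map_mul, Equiv.Perm.mul_apply, phi_simple, phi_apply, eta_apply]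
    show (0 : ZMod 2) + bitW cs (π ω) t + (if π ω * t.1 * (π ω)⁻¹ = s i then 1 else 0) = _
    rw [zero_add, ih, if_congr hcond rfl rfl]
    show _ = (if t.1 = (π ω)⁻¹ * s i * π ω then (1 : ZMod 2) else 0) + bitSum t.1 (cs.rightInvSeq ω)
    ring

open Classical in
lemma bitW_self {t : W} (ht : cs.IsReflection t) : bitW cs t ⟨t, ht⟩ = 1 := by
  classical
  obtain ⟨u, i, huit⟩ := ht
  have hrefl : cs.IsReflection (u * s i * u⁻¹) := ⟨u, i, rfl⟩
  have hsi : cs.IsReflection (s i) := cs.isReflection_simple i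
  -- `phi u⁻¹` sends `(t, 0)` to `(s i, γ)` for some `γ` with `γ + bitW cs u ⟨s i, _⟩ = 0`
  have h1 : phi cs u⁻¹ ((⟨t, huit ▸ hrefl⟩ : {t : W // cs.IsReflection t}), (0 : ZMod 2))
      = (⟨s i, hsi⟩, bitW cs u⁻¹ ⟨t, huit ▸ hrefl⟩) := by
    rw [phi_apply]
    apply Prod.ext
    · apply Subtype.ext
      show u⁻¹ * t * u⁻¹⁻¹ = s i
      rw [huit]
      group
    · rw [zero_add]
  have h2 : phi cs u (⟨s i, hsi⟩, bitW cs u⁻¹ ⟨t, huit ▸ hrefl⟩)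
      = (⟨t, huit ▸ hrefl⟩, (0 : ZMod 2)) := by
    rw [← h1, ← Equiv.Perm.mul_apply, ← map_mul, mul_inv_cancel, map_one]
    rfl
  have h2' := phi_apply cs u ⟨s i, hsi⟩ (bitW cs u⁻¹ ⟨t, huit ▸ hrefl⟩)
  rw [h2] at h2'
  have hkey : bitW cs u⁻¹ ⟨t, huit ▸ hrefl⟩ + bitW cs u ⟨s i, hsi⟩ = 0 :=
    (congrArg Prod.snd h2').symm
  -- now compute `phi t (t, 0)` step by step
  set γ := bitW cs u⁻¹ ⟨t, huit ▸ hrefl⟩ with hγ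
  have hsss : etaFun cs i (⟨s i, hsi⟩, γ) = (⟨s i, hsi⟩, γ + 1) := by
    unfold etaFun
    apply Prod.ext
    · apply Subtype.ext
      show s i * s i * s i = s i
      rw [cs.simple_mul_simple_self, one_mul]
    · show γ + (if s i = s i then (1 : ZMod 2) else 0) = γ + 1
      rw [if_pos rfl]
  have h3 : phi cs t ((⟨t, huit ▸ hrefl⟩ : {t : W // cs.IsReflection t}), (0 : ZMod 2))
      = (⟨t, huit ▸ hrefl⟩, 1) := by
    have hphit : phi cs t = phi cs u * phi cs (s i) * phi cs u⁻¹ := by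
      rw [huit, map_mul, map_mul]
    rw [hphit]
    rw [Equiv.Perm.mul_apply, Equiv.Perm.mul_apply, h1, phi_simple, eta_apply, hsss,
      phi_apply]
    apply Prod.ext
    · apply Subtype.ext
      show u * s i * u⁻¹ = t
      rw [huit]
    · show γ + 1 + bitW cs u ⟨s i, hsi⟩ = 1
      rw [show γ + 1 + bitW cs u ⟨s i, hsi⟩ = (γ + bitW cs u ⟨s i, hsi⟩) + 1 from by ring,
        hkey, zero_add]
  exact congrArg Prod.snd h3

open Classical in
lemma mem_rightInvSeq_of_inversion {ω : List B} (hω : cs.IsReduced ω) {t : W}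
    (ht : cs.IsReflection t) (hlt : ℓ (π (ω) * t) < ℓ (π ω)) : t ∈ cs.rightInvSeq ω := by
  obtain ⟨τ, hτred, hτ⟩ := cs.exists_reduced_word' (π ω * t)
  have hnot : t ∉ cs.rightInvSeq τ := by
    intro hmem
    have hinv := cs.isRightInversion_of_mem_rightInvSeq hτred hmem
    rw [← hτ] at hinv
    have hcan : π ω * t * t = π ω := by rw [mul_assoc, ht.mul_self, mul_one]
    rw [IsRightInversion, hcan] at hinv
    omega
  have hb0 : bitW cs (π ω * t) ⟨t, ht⟩ = 0 := by
    rw [hτ, bitW_wordProd]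
    exact bitSum_eq_zero hnot
  have h1 : phi cs t ((⟨t, ht⟩ : {t : W // cs.IsReflection t}), (0 : ZMod 2))
      = (⟨t, ht⟩, 1) := by
    have h := phi_apply cs t ⟨t, ht⟩ 0
    rw [zero_add, bitW_self] at h
    rw [h]
    congr 1
    apply Subtype.ext
    show t * t * t⁻¹ = t
    rw [ht.mul_self, one_mul, ht.inv]
  have hb1 : bitW cs (π ω) ⟨t, ht⟩ = 1 := by
    have hw : π ω = (π ω * t) * t := by rw [mul_assoc, ht.mul_self, mul_one]
    have hb : bitW cs (π ω) ⟨t, ht⟩ = ((phi cs ((π ω * t) * t)) (⟨t, ht⟩, 0)).2 := by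
      rw [← hw]
      rfl
    rw [hb, map_mul, Equiv.Perm.mul_apply, h1, phi_apply]
    show (1 : ZMod 2) + bitW cs (π ω * t) ⟨t, ht⟩ = 1
    rw [hb0, add_zero]
  have hbs := bitW_wordProd cs ω ⟨t, ht⟩
  rw [hb1] at hbs
  apply mem_of_bitSum_ne_zero (t := t)
  intro h0
  rw [h0] at hbs
  exact one_ne_zero hbs

lemma isRightInversion_iff_mem {ω : List B} (hω : cs.IsReduced ω) (t : W) :
    cs.IsRightInversion (π ω) t ↔ t ∈ cs.rightInvSeq ω := by
  constructor
  · rintro ⟨ht, hlt⟩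
    exact mem_rightInvSeq_of_inversion cs hω ht hlt
  · exact cs.isRightInversion_of_mem_rightInvSeq hω

lemma isRightInversion_mul_simple_iff {w : W} {i : B} (ha : ℓ (w * s i) = ℓ w + 1) (t : W) :
    cs.IsRightInversion (w * s i) t ↔ (t = s i ∨ cs.IsRightInversion w (s i * t * s i)) := by
  obtain ⟨ω, hred, hw⟩ := cs.exists_reduced_word' w
  have hπ : π (ω.concat i) = w * s i := by rw [cs.wordProd_concat, ← hw]
  have hred' : cs.IsReduced (ω.concat i) := by
    show ℓ (π (ω.concat i)) = (ω.concat i).length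
    rw [hπ, ha, List.length_concat]
    have : ℓ w = ω.length := by rw [hw]; exact hred
    rw [this]
  rw [← hπ, isRightInversion_iff_mem cs hred', cs.rightInvSeq_concat]
  rw [List.concat_eq_append, List.mem_append, List.mem_singleton, List.mem_map]
  have hconj : ∀ u : W, (MulAut.conj (s i)) u = s i * u * s i := by
    intro u
    rw [MulAut.conj_apply, cs.inv_simple]
  constructor
  · rintro (⟨u, hu, rfl⟩ | rfl)
    · right
      have hcan : s i * ((MulAut.conj (s i)) u) * s i = u := by
        rw [hconj]
        simp [mul_assoc, cs.simple_mul_simple_cancel_left, cs.simple_mul_simple_self]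
      rw [hcan, hw]
      exact (isRightInversion_iff_mem cs hred u).mpr hu
    · exact Or.inl rfl
  · rintro (rfl | hinv)
    · exact Or.inr rfl
    · left
      refine ⟨s i * t * s i, ?_, ?_⟩
      · rw [hw] at hinv
        exact (isRightInversion_iff_mem cs hred _).mp hinv
      · rw [hconj]
        simp [mul_assoc, cs.simple_mul_simple_cancel_left, cs.simple_mul_simple_self]

lemma eq_of_inversions_eq : ∀ (n : ℕ) (x y : W), ℓ x = n →
    (∀ t, cs.IsRightInversion x t ↔ cs.IsRightInversion y t) → x = y := by
  intro n
  induction n using Nat.strong_induction_on with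
  | _ n IH =>
    intro x y hn h
    by_cases hx : x = 1
    · subst hx
      by_contra hy
      obtain ⟨i, hi⟩ := cs.exists_rightDescent_of_ne_one (fun h => hy h.symm)
      have : cs.IsRightInversion y (s i) :=
        (cs.isRightInversion_simple_iff_isRightDescent y i).mpr hi
      have h1 : cs.IsRightInversion 1 (s i) := (h (s i)).mpr this
      have h2 := h1.2
      simp at h2
    · obtain ⟨i, hi⟩ := cs.exists_rightDescent_of_ne_one hx
      have hiy : cs.IsRightDescent y i := by
        have := (h (s i)).mp ((cs.isRightInversion_simple_iff_isRightDescent x i).mpr hi)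
        exact (cs.isRightInversion_simple_iff_isRightDescent y i).mp this
      have hxd : ℓ (x * s i) + 1 = ℓ x := cs.isRightDescent_iff.mp hi
      have hyd : ℓ (y * s i) + 1 = ℓ y := cs.isRightDescent_iff.mp hiy
      have hax : ℓ ((x * s i) * s i) = ℓ (x * s i) + 1 := by
        rw [cs.simple_mul_simple_cancel_right, hxd]
      have hay : ℓ ((y * s i) * s i) = ℓ (y * s i) + 1 := by
        rw [cs.simple_mul_simple_cancel_right, hyd]
      have hAx := fun t => isRightInversion_mul_simple_iff cs hax t
      have hAy := fun t => isRightInversion_mul_simple_iff cs hay t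
      simp only [cs.simple_mul_simple_cancel_right] at hAx hAy
      -- derived form: Inv x' t ↔ Inv x (s i * t * s i) ∧ t ≠ s i, where x' = x * s i
      have hder : ∀ (z : W), ℓ ((z * s i) * s i) = ℓ (z * s i) + 1 →
          (∀ t, cs.IsRightInversion ((z * s i) * s i) t ↔
            (t = s i ∨ cs.IsRightInversion (z * s i) (s i * t * s i))) →
          ∀ t, cs.IsRightInversion (z * s i) t ↔
            (cs.IsRightInversion z (s i * t * s i) ∧ t ≠ s i) := by
        intro z hz hA t
        constructor
        · intro hzt
          have htne : t ≠ s i := by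
            rintro rfl
            have h3 := hz
            have h4 := hzt.2
            rw [cs.simple_mul_simple_cancel_right] at h3 h4
            omega
          constructor
          · have h2 := (hA (s i * t * s i)).mpr (Or.inr (by
              rwa [show s i * (s i * t * s i) * s i = t from by
                simp [mul_assoc, cs.simple_mul_simple_cancel_left,
                  cs.simple_mul_simple_self]]))
            rwa [cs.simple_mul_simple_cancel_right] at h2
          · exact htne
        · rintro ⟨hzt, htne⟩
          have h2 := (hA (s i * t * s i)).mp (by rwa [cs.simple_mul_simple_cancel_right])
          rcases h2 with h2 | h2
          · exfalso
            apply htne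
            have := congrArg (fun a => s i * a * s i) h2
            simpa [mul_assoc, cs.simple_mul_simple_cancel_left,
              cs.simple_mul_simple_self] using this
          · rwa [show s i * (s i * t * s i) * s i = t from by
              simp [mul_assoc, cs.simple_mul_simple_cancel_left,
                cs.simple_mul_simple_self]] at h2
      have hkey : ∀ t, cs.IsRightInversion (x * s i) t ↔ cs.IsRightInversion (y * s i) t := by
        intro t
        rw [hder x hax (fun t => isRightInversion_mul_simple_iff cs hax t),
            hder y hay (fun t => isRightInversion_mul_simple_iff cs hay t)]
        rw [h (s i * t * s i)]
      have hlt : ℓ (x * s i) < n := by omega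
      have := IH (ℓ (x * s i)) hlt (x * s i) (y * s i) rfl hkey
      have hxy : x * s i * s i = y * s i * s i := by rw [this]
      rwa [cs.simple_mul_simple_cancel_right, cs.simple_mul_simple_cancel_right] at hxy

lemma eq_longest {we : W} (hwe : ∀ w : W, ℓ w ≤ ℓ we) (x : W) (hx : ℓ x = ℓ we) :
    x = we := by
  have hmax : ∀ (u : W), ℓ u = ℓ we → ∀ t, cs.IsRightInversion u t ↔ cs.IsReflection t := by
    intro u hu t
    constructor
    · exact fun h => h.1
    · intro ht
      refine ⟨ht, lt_of_le_of_ne ?_ (ht.length_mul_left_ne u)⟩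
      rw [hu]
      exact hwe _
  apply eq_of_inversions_eq cs (ℓ x) x we rfl
  intro t
  rw [hmax x hx t, hmax we rfl t]

end Exchange

end Stmt9Aux

open Classical in
/-- Let `W_e` be a finite Coxeter group with diagram automorphism `σ_I` and a
`σ_I`-Coxeter element `c_I` (given by a reduced word `l` hitting each `σ_I`-orbit exactly
once) such that there is `N` with `(c_I σ_I)^N = w_e σ_I^N` (holomorph identity) and
`N ℓ_e(c_I) = ℓ_e(w_e)`.  Suppose `v ≤ c_I` in Bruhat order (i.e. `v` is the product of a
subword of the reduced word `l`) and `v σ_I ∈ ⟨c_I σ_I⟩` (as elements of the holomorph).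
`σ_I` is moreover as in Theorem "Coxeter", so it is trivial as soon as it fixes `c_I`
(hypothesis `hcox3`).  If `σ_I ≠ 1` or `v ≠ 1`, then `v = c_I`. -/
theorem stmt9 {B : Type*} [Fintype B] {W : Type*} [Group W] [Finite W]
    {M : CoxeterMatrix B} (cs : CoxeterSystem M W)
    (σB : Equiv.Perm B) (σI : W ≃* W)
    (hσ : ∀ i, σI (cs.simple i) = cs.simple (σB i))
    (l : List B) (hlred : cs.IsReduced l)
    (hlorb : ∀ j : B, l.countP (fun i => decide (SameOrbit σB i j)) = 1)
    (cI : W) (hcI : cI = cs.wordProd l)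
    (we : W) (hwe : ∀ w : W, cs.length w ≤ cs.length we)
    (N : ℕ)
    (hast₁ : ∀ w : W, (fun v => cI * σI v)^[N] w = we * ((σI ^ N : W ≃* W) w))
    (hast₂ : N * cs.length cI = cs.length we)
    -- Theorem "Coxeter" (3): σ_I is trivial as soon as it fixes the Coxeter element c_I
    (hcox3 : σI cI = cI → σI = MulEquiv.refl W)
    -- v ≤ c_I in Bruhat order: v is the product of a subword of the reduced word l of c_I
    (v : W) (hv : ∃ l' : List B, l'.Sublist l ∧ v = cs.wordProd l')
    -- v σ_I lies in the cyclic group generated by c_I σ_I (in the holomorph)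
    (hmem : ∃ n : ℕ, ∀ w : W, v * σI w = (fun u => cI * σI u)^[n] w)
    (hne : σI ≠ MulEquiv.refl W ∨ v ≠ 1) :
    v = cI := by
  classical
  obtain ⟨n, hn⟩ := hmem
  obtain ⟨l', hsub, hvl⟩ := hv
  -- basic facts about powers of σI
  have hσzero : ∀ w : W, (σI ^ 0 : W ≃* W) w = w := by
    intro w
    rw [pow_zero]
    rfl
  have hσpow_succ : ∀ (k : ℕ) (w : W), (σI ^ (k + 1) : W ≃* W) w = (σI ^ k : W ≃* W) (σI w) := by
    intro k w
    rw [pow_succ]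
    rfl
  have hσpow_succ' : ∀ (k : ℕ) (w : W), (σI ^ (k + 1) : W ≃* W) w = σI ((σI ^ k : W ≃* W) w) := by
    intro k w
    rw [pow_succ']
    rfl
  -- σI preserves lengths
  have hσsymm : ∀ j, σI.symm (cs.simple j) = cs.simple (σB.symm j) := by
    intro j
    have h := hσ (σB.symm j)
    rw [Equiv.apply_symm_apply] at h
    rw [← h, MulEquiv.symm_apply_apply]
  have hword : ∀ ω : List B, σI (cs.wordProd ω) = cs.wordProd (ω.map σB) := by
    intro ω
    induction ω with
    | nil => simp [cs.wordProd_nil]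
    | cons i ω ih =>
      rw [cs.wordProd_cons, map_mul, ih, List.map_cons, cs.wordProd_cons, hσ]
  have hwordsymm : ∀ ω : List B, σI.symm (cs.wordProd ω) = cs.wordProd (ω.map σB.symm) := by
    intro ω
    induction ω with
    | nil => simp [cs.wordProd_nil]
    | cons i ω ih =>
      rw [cs.wordProd_cons, map_mul, ih, List.map_cons, cs.wordProd_cons, hσsymm]
  have hlenσ : ∀ w, cs.length (σI w) = cs.length w := by
    intro w
    apply Nat.le_antisymm
    · obtain ⟨ω, hred, hw⟩ := cs.exists_reduced_word' w
      rw [hw, hword]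
      calc cs.length (cs.wordProd (ω.map σB)) ≤ (ω.map σB).length := cs.length_wordProd_le _
        _ = ω.length := List.length_map _
        _ = cs.length (cs.wordProd ω) := hred.symm
    · obtain ⟨ω, hred, hw⟩ := cs.exists_reduced_word' (σI w)
      have hwb : w = σI.symm (σI w) := (MulEquiv.symm_apply_apply σI w).symm
      calc cs.length w = cs.length (σI.symm (σI w)) := by rw [← hwb]
        _ = cs.length (cs.wordProd (ω.map σB.symm)) := by rw [hw, hwordsymm]
        _ ≤ (ω.map σB.symm).length := cs.length_wordProd_le _
        _ = ω.length := List.length_map _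
        _ = cs.length (σI w) := by rw [hw]; exact hred.symm
  have hlenpow : ∀ (k : ℕ) (w : W), cs.length ((σI ^ k : W ≃* W) w) = cs.length w := by
    intro k
    induction k with
    | zero => intro w; rw [hσzero w]
    | succ k ih =>
      intro w
      rw [hσpow_succ' k w, hlenσ, ih]
  -- the sequence of partial products
  set p : ℕ → W := fun k => (fun u => cI * σI u)^[k] (1 : W) with hp
  have hp0 : p 0 = 1 := rfl
  have hiter : ∀ (k : ℕ) (w : W),
      (fun u => cI * σI u)^[k] w = p k * (σI ^ k : W ≃* W) w := by
    intro k
    induction k with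
    | zero =>
      intro w
      rw [Function.iterate_zero_apply, hσzero w, hp0, one_mul]
    | succ k ih =>
      intro w
      rw [Function.iterate_succ_apply, ih (cI * σI w)]
      have hpk1 : p (k + 1) = p k * (σI ^ k : W ≃* W) cI := by
        have h2 : p (k + 1) = (fun u => cI * σI u)^[k] (cI * σI 1) := by
          rw [hp]
          exact Function.iterate_succ_apply _ k 1
        rw [map_one, mul_one, ih cI] at h2
        exact h2
      rw [hpk1, map_mul, mul_assoc, hσpow_succ k w]
  have hcocycle : ∀ a b : ℕ, p (a + b) = p a * (σI ^ a : W ≃* W) (p b) := by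
    intro a b
    have h1 : p (a + b) = (fun u => cI * σI u)^[a] ((fun u => cI * σI u)^[b] 1) := by
      rw [hp]
      exact Function.iterate_add_apply _ a b 1
    rw [h1, hiter a]
  have hp1 : p 1 = cI := by
    have := hcocycle 0 1
    rw [hp]
    show (fun u => cI * σI u)^[1] 1 = cI
    rw [Function.iterate_one]
    simp
  have hpN : p N = we := by
    have h := hast₁ 1
    rw [map_one, mul_one] at h
    exact h
  have hup : ∀ k, cs.length (p k) ≤ k * cs.length cI := by
    intro k
    induction k with
    | zero => simp [hp0]
    | succ k ih =>
      have h1 : p (k + 1) = p k * (σI ^ k : W ≃* W) cI := by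
        have h := hcocycle k 1
        rw [hp1] at h
        exact h
      rw [h1]
      calc cs.length (p k * (σI ^ k : W ≃* W) cI)
          ≤ cs.length (p k) + cs.length ((σI ^ k : W ≃* W) cI) := cs.length_mul_le _ _
        _ = cs.length (p k) + cs.length cI := by rw [hlenpow]
        _ ≤ k * cs.length cI + cs.length cI := by omega
        _ = (k + 1) * cs.length cI := by ring
  have hexact : ∀ k, k ≤ N → cs.length (p k) = k * cs.length cI := by
    intro k hk
    obtain ⟨m, hNm⟩ := Nat.exists_eq_add_of_le hk
    have h1 : p N = p k * (σI ^ k : W ≃* W) (p m) := by rw [hNm]; exact hcocycle k m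
    have h2 : cs.length (p N) = N * cs.length cI := by rw [hpN, ← hast₂]
    have h3 : cs.length (p N) ≤ cs.length (p k) + m * cs.length cI := by
      rw [h1]
      calc cs.length (p k * (σI ^ k : W ≃* W) (p m))
          ≤ cs.length (p k) + cs.length ((σI ^ k : W ≃* W) (p m)) := cs.length_mul_le _ _
        _ = cs.length (p k) + cs.length (p m) := by rw [hlenpow]
        _ ≤ cs.length (p k) + m * cs.length cI := by have := hup m; omega
    have h4 := hup k
    have h5 : N * cs.length cI = k * cs.length cI + m * cs.length cI := by
      rw [hNm, add_mul]
    omega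
  -- longest element consequences
  have hweinv : we⁻¹ = we := by
    apply Stmt9Aux.eq_longest cs hwe
    rw [cs.length_inv]
  have hσNwe : (σI ^ N : W ≃* W) we = we := by
    apply Stmt9Aux.eq_longest cs hwe
    rw [hlenpow]
  have hp2N : p (2 * N) = 1 := by
    rw [two_mul, hcocycle N N, hpN, hσNwe]
    nth_rewrite 2 [← hweinv]
    exact mul_inv_cancel we
  have hper : ∀ q r : ℕ, p (r + q * (2 * N)) = p r := by
    intro q
    induction q with
    | zero => intro r; simp
    | succ q ih =>
      intro r
      have h1 : r + (q + 1) * (2 * N) = (r + q * (2 * N)) + 2 * N := by ring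
      rw [h1, hcocycle, hp2N, map_one, mul_one, ih]
  have hmirror : ∀ k, k ≤ 2 * N → cs.length (p (2 * N - k)) = cs.length (p k) := by
    intro k hk
    have h1 : p (k + (2 * N - k)) = p k * (σI ^ k : W ≃* W) (p (2 * N - k)) := hcocycle _ _
    rw [show k + (2 * N - k) = 2 * N from by omega, hp2N] at h1
    have h2 : (σI ^ k : W ≃* W) (p (2 * N - k)) = (p k)⁻¹ :=
      (mul_eq_one_iff_inv_eq.mp h1.symm).symm
    have h3 := congrArg cs.length h2
    rw [hlenpow, cs.length_inv] at h3
    exact h3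
  -- identify v with a partial product
  have hv_eq : v = p n := by
    have h := hn 1
    rw [map_one, mul_one] at h
    exact h
  by_cases hv1 : v = 1
  · exfalso
    have hcomm : σI cI = cI := by
      have h1 := hn ((fun u => cI * σI u) 1)
      have h2 := hn 1
      rw [hv1, one_mul] at h1 h2
      have h3 : (fun u => cI * σI u)^[n] ((fun u => cI * σI u) 1)
          = (fun u => cI * σI u) ((fun u => cI * σI u)^[n] 1) := by
        rw [← Function.iterate_succ_apply, Function.iterate_succ_apply']
      rw [h3, ← h2] at h1
      simp only [map_one, mul_one] at h1
      exact h1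
    have hrefl := hcox3 hcomm
    rcases hne with h | h
    · exact h hrefl
    · exact h hv1
  · have hlv_pos : 1 ≤ cs.length v := by
      rcases Nat.eq_zero_or_pos (cs.length v) with h | h
      · exact absurd (cs.length_eq_zero_iff.mp h) hv1
      · exact h
    have hllen : l.length = cs.length cI := by rw [hcI]; exact hlred.symm
    have hlv_le : cs.length v ≤ cs.length cI := by
      have h1 : cs.length v ≤ l'.length := by rw [hvl]; exact cs.length_wordProd_le l'
      have h2 : l'.length ≤ l.length := hsub.length_le
      omega
    have hℓc_pos : 0 < cs.length cI := by omega
    have hN_pos : 0 < N := by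
      by_contra h0
      have hN0 : N = 0 := by omega
      rw [hN0] at hast₂
      have h1 := hwe v
      rw [← hast₂, Nat.zero_mul] at h1
      omega
    have h2N_pos : 0 < 2 * N := by omega
    have hpn' : p n = p (n % (2 * N)) := by
      have heq : n % (2 * N) + n / (2 * N) * (2 * N) = n := Nat.mod_add_div' n (2 * N)
      calc p n = p (n % (2 * N) + n / (2 * N) * (2 * N)) := by rw [heq]
        _ = p (n % (2 * N)) := hper _ _
    have hvn' : v = p (n % (2 * N)) := by rw [hv_eq, hpn']
    have hn'lt : n % (2 * N) < 2 * N := Nat.mod_lt n h2N_pos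
    by_cases hcase : n % (2 * N) ≤ N
    · have hl : cs.length v = (n % (2 * N)) * cs.length cI := by
        rw [hvn']
        exact hexact _ hcase
      have hn'1 : n % (2 * N) = 1 := by
        have hne0 : n % (2 * N) ≠ 0 := by
          intro h0
          rw [h0, zero_mul] at hl
          omega
        have hle1 : n % (2 * N) ≤ 1 := by
          by_contra hgt
          have h2 : 2 ≤ n % (2 * N) := by omega
          have h3 : 2 * cs.length cI ≤ (n % (2 * N)) * cs.length cI :=
            Nat.mul_le_mul_right _ h2
          omega
        omega
      rw [hvn', hn'1, hp1]
    · push_neg at hcase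
      have hkN : 2 * N - n % (2 * N) ≤ N := by omega
      have hk1 : 1 ≤ 2 * N - n % (2 * N) := by omega
      have hlv : cs.length v = (2 * N - n % (2 * N)) * cs.length cI := by
        have hm := hmirror (2 * N - n % (2 * N)) (by omega)
        rw [show 2 * N - (2 * N - n % (2 * N)) = n % (2 * N) from by omega] at hm
        rw [hvn', hm]
        exact hexact _ hkN
      have hkeq : 2 * N - n % (2 * N) = 1 := by
        by_contra hgt
        have h2 : 2 ≤ 2 * N - n % (2 * N) := by omega
        have h3 : 2 * cs.length cI ≤ (2 * N - n % (2 * N)) * cs.length cI :=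
          Nat.mul_le_mul_right _ h2
        omega
      have hlveq : cs.length v = cs.length cI := by rw [hlv, hkeq, one_mul]
      have hl'len : l'.length = l.length := by
        have h1 : cs.length v ≤ l'.length := by rw [hvl]; exact cs.length_wordProd_le l'
        have h2 : l'.length ≤ l.length := hsub.length_le
        omega
      have hl'l : l' = l := hsub.eq_of_length hl'len
      rw [hvl, hl'l, ← hcI]
end

section
/- Let W_e be a finite Coxeter group with simple roots Δ_e, Bruhat order, and diagram automorphism σ_I. Let K ⊆ Δ_e be σ_I-stable with parabolic W_K and c_2 a σ_I-Coxeter element of W_K. If x is a minimal-length right coset representative (x ∈ {}^{K'}W_e for some K') with σ_I(x) = x c_2', where c_2' ≤ c_2 is a partial σ_I-Coxeter element, then c_2' = 1 and x = σ_I(x). -/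
namespace Stmt15Aux

open List Finset
open scoped Classical

variable {B : Type*} [Fintype B] (M : CoxeterMatrix B)

/-- The standard bilinear form coefficients. -/
noncomputable def km (i j : B) : ℝ := - Real.cos (Real.pi / (M i j))

/-- `bf M i v = B(e_i, v)`. -/
noncomputable def bf (i : B) (v : B → ℝ) : ℝ := ∑ b, km M i b * v b

theorem bf_add (i : B) (u v : B → ℝ) : bf M i (u + v) = bf M i u + bf M i v := by
  simp [bf, mul_add, Finset.sum_add_distrib]

theorem bf_smul (i : B) (t : ℝ) (v : B → ℝ) : bf M i (t • v) = t * bf M i v := by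
  simp [bf, Finset.mul_sum]; congr 1; funext b; ring

/-- The geometric reflection attached to `i`. -/
noncomputable def rf (i : B) : Module.End ℝ (B → ℝ) where
  toFun v := fun a => v a - (if a = i then 2 * bf M i v else 0)
  map_add' u v := by
    funext a
    by_cases h : a = i <;> simp [h, bf_add, Pi.add_apply] <;> ring
  map_smul' t v := by
    funext a
    by_cases h : a = i <;> simp [h, bf_smul, Pi.smul_apply, smul_eq_mul] <;> ring

theorem rf_apply (i : B) (v : B → ℝ) (a : B) :
    rf M i v a = v a - (if a = i then 2 * bf M i v else 0) := rfl

theorem rf_apply_ne {i a : B} (h : a ≠ i) (v : B → ℝ) : rf M i v a = v a := by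
  simp [rf_apply, h]

theorem rf_apply_self (i : B) (v : B → ℝ) : rf M i v i = v i - 2 * bf M i v := by
  simp [rf_apply]

theorem km_diag (i : B) : km M i i = 1 := by
  simp [km, M.diagonal i, Real.cos_pi]

/-- standard basis vector -/
noncomputable def ee (i : B) : B → ℝ := fun b => if b = i then 1 else 0

theorem bf_ee (i j : B) : bf M i (ee j) = km M i j := by
  classical
  simp [bf, ee, mul_ite, Finset.sum_ite_eq']

theorem rf_ee_self (i : B) : rf M i (ee i) = -ee i := by
  funext a
  by_cases h : a = i <;> simp [rf_apply, h, bf_ee, km_diag, ee] <;> norm_num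


theorem rf_eq (i : B) (v : B → ℝ) : rf M i v = v + (-(2 * bf M i v)) • ee i := by
  funext a
  by_cases h : a = i <;> simp [rf_apply, h, ee] <;> ring

theorem bf_rf (a b : B) (v : B → ℝ) :
    bf M a (rf M b v) = bf M a v - 2 * bf M b v * km M a b := by
  rw [rf_eq]
  show bf M a (v + (-(2 * bf M b v)) • ee b) = _
  rw [bf_add, bf_smul, bf_ee]; ring

theorem rf_invol (i : B) (v : B → ℝ) : rf M i (rf M i v) = v := by
  rw [rf_eq M i (rf M i v), bf_rf, km_diag, rf_eq]
  funext a
  by_cases h : a = i <;> simp [ee, h] <;> ring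

theorem rf_mul_self (i : B) : (rf M i * rf M i : Module.End ℝ (B → ℝ)) = 1 := by
  apply LinearMap.ext; intro v
  exact rf_invol M i v

section Plane

/-- The composite of two geometric reflections. -/
noncomputable def DD (i j : B) : Module.End ℝ (B → ℝ) := rf M i * rf M j

noncomputable def cc (i j : B) : ℝ := km M i j
noncomputable def th (i j : B) : ℝ := Real.pi / (M i j)
noncomputable def ssn (i j : B) : ℝ := Real.sin (th M i j)
noncomputable def om (i j : B) : ℂ := (cc M i j : ℝ) + (ssn M i j : ℝ) * Complex.I
noncomputable def lam (i j : B) : ℂ := Complex.exp (2 * (th M i j : ℝ) * Complex.I)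

noncomputable def a0 (i j : B) (v : B → ℝ) : ℝ := -(2 * bf M i v) + 4 * cc M i j * bf M j v
noncomputable def b0 (i j : B) (v : B → ℝ) : ℝ := -(2 * bf M j v)

variable (i j : B)

theorem km_comm : km M j i = km M i j := by
  unfold km; rw [M.isSymm.apply i j]

theorem DD_apply (v : B → ℝ) :
    DD M i j v = v + a0 M i j v • ee i + b0 M i j v • ee j := by
  funext a
  have h1 : bf M i (rf M j v) = bf M i v - 2 * bf M j v * km M i j := bf_rf M i j v
  show rf M i (rf M j v) a = v a + a0 M i j v * ee i a + b0 M i j v * ee j a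
  rw [rf_apply, rf_apply, h1]
  unfold a0 b0 cc ee
  by_cases hai : a = i <;> by_cases haj : a = j
  · have hij : i = j := hai.symm.trans haj
    simp only [if_pos hai, if_pos haj, hij, km_diag]; ring
  · simp only [if_pos hai, if_neg haj]; ring
  · simp only [if_neg hai, if_pos haj]; ring
  · simp only [if_neg hai, if_neg haj]; ring


theorem cos_th : Real.cos (th M i j) = -(cc M i j) := by unfold cc km th; ring

theorem hs2 : (ssn M i j)^2 = 1 - (cc M i j)^2 := by
  have h := Real.sin_sq (th M i j)
  rw [ssn, h, cos_th]; ring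

theorem lam_eq : lam M i j = (2*((cc M i j : ℝ) : ℂ)^2 - 1)
    + (-(2*((cc M i j : ℝ) : ℂ)*((ssn M i j : ℝ) : ℂ))) * Complex.I := by
  unfold lam
  have h0 : (2 * ((th M i j : ℝ) : ℂ) * Complex.I) = (((2 * th M i j : ℝ) : ℂ) * Complex.I) := by
    push_cast; ring
  rw [h0, Complex.exp_mul_I, ← Complex.ofReal_cos, ← Complex.ofReal_sin]
  rw [Real.cos_two_mul, Real.sin_two_mul, cos_th, ← ssn]
  push_cast; ring

theorem idI1 : (4*((cc M i j : ℝ) : ℂ)^2 - 1) - (2*((cc M i j : ℝ) : ℂ)) * om M i j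
    = lam M i j := by
  rw [lam_eq]; unfold om; push_cast; ring

theorem idI2 : (2*((cc M i j : ℝ) : ℂ)) - om M i j = lam M i j * om M i j := by
  rw [lam_eq]; unfold om
  have hI : (Complex.I)^2 = -1 := Complex.I_sq
  have hS : ((ssn M i j : ℝ) : ℂ)^2 = 1 - ((cc M i j : ℝ) : ℂ)^2 := by
    exact_mod_cast congrArg (fun t : ℝ => (t : ℂ)) (hs2 M i j)
  push_cast
  linear_combination (2*((cc M i j : ℝ):ℂ)*((ssn M i j : ℝ):ℂ)^2) * hI
    + (-(2*((cc M i j : ℝ):ℂ))) * hS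

theorem a0_ee_i : a0 M i j (ee i) = 4*(cc M i j)^2 - 2 := by
  unfold a0; rw [bf_ee, bf_ee, km_diag, km_comm]; unfold cc; ring

theorem b0_ee_i : b0 M i j (ee i) = -(2*(cc M i j)) := by
  unfold b0; rw [bf_ee, km_comm]; unfold cc; ring

theorem a0_ee_j : a0 M i j (ee j) = 2*(cc M i j) := by
  unfold a0; rw [bf_ee, bf_ee, km_diag]; unfold cc; ring

theorem b0_ee_j : b0 M i j (ee j) = -2 := by
  unfold b0; rw [bf_ee, km_diag]; norm_num

theorem DD_ee_i : DD M i j (ee i) = ee i + (4*(cc M i j)^2 - 2) • ee i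
    + (-(2*(cc M i j))) • ee j := by
  rw [DD_apply, a0_ee_i, b0_ee_i]

theorem DD_ee_j : DD M i j (ee j) = ee j + (2*(cc M i j)) • ee i + (-2 : ℝ) • ee j := by
  rw [DD_apply, a0_ee_j, b0_ee_j]

theorem DD_pow (t : ℕ) (v : B → ℝ) : ∃ x y : ℝ,
    ((DD M i j)^t) v = v + x • ee i + y • ee j ∧
    ((x : ℂ) + (y : ℂ) * om M i j
      = (∑ r ∈ Finset.range t, (lam M i j)^r) * ((a0 M i j v : ℂ) + (b0 M i j v : ℂ) * om M i j)) := by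
  induction t with
  | zero => exact ⟨0, 0, by simp, by simp⟩
  | succ t ih =>
    obtain ⟨x, y, h1, h2⟩ := ih
    refine ⟨a0 M i j v + ((4*(cc M i j)^2 - 1) * x + 2*(cc M i j)*y),
            b0 M i j v + (-(2*(cc M i j))*x - y), ?_, ?_⟩
    · rw [pow_succ', Module.End.mul_apply, h1, map_add, map_add, map_smul, map_smul,
        DD_apply, DD_ee_i, DD_ee_j]
      module
    · rw [geom_sum_succ]
      push_cast
      linear_combination ((x:ℝ):ℂ) * idI1 M i j + ((y:ℝ):ℂ) * idI2 M i j + lam M i j * h2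

theorem comb_zero (i j : B) (hij : i ≠ j) {x y : ℝ} (h : x • ee i + y • ee j = 0) : x = 0 ∧ y = 0 := by
  have hi := congrFun h i
  have hj := congrFun h j
  simp [ee, Pi.add_apply, if_neg (fun hh : i = j => hij hh),
    if_neg (fun hh : j = i => hij hh.symm)] at hi hj
  exact ⟨hi, hj⟩

theorem th_pos (hm : M i j ≠ 0) : 0 < th M i j := by
  have hm0 : (0:ℝ) < (M i j : ℝ) := by
    exact_mod_cast Nat.pos_of_ne_zero hm
  exact div_pos Real.pi_pos hm0

theorem th_lt_pi (hm : 2 ≤ M i j) : th M i j < Real.pi := by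
  unfold th
  have hm1 : (1:ℝ) < (M i j : ℝ) := by exact_mod_cast hm.trans_lt' (by norm_num)
  exact div_lt_self Real.pi_pos hm1

theorem ssn_pos (hm : 2 ≤ M i j) : 0 < ssn M i j := by
  exact Real.sin_pos_of_pos_of_lt_pi (th_pos M i j (by omega)) (th_lt_pi M i j hm)

theorem om_inj (hs : ssn M i j ≠ 0) {x y : ℝ} (h : (x:ℂ) + (y:ℂ) * om M i j = 0) :
    x = 0 ∧ y = 0 := by
  unfold om at h
  rw [Complex.ext_iff] at h
  simp at h
  obtain ⟨h1, h2⟩ := h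
  have hy : y = 0 := by
    rcases h2 with h | h
    · exact h
    · exact absurd h hs
  subst hy; simp at h1; exact ⟨h1, rfl⟩


theorem lam_pow_M (hm : M i j ≠ 0) : (lam M i j)^(M i j) = 1 := by
  unfold lam
  rw [← Complex.exp_nat_mul]
  have hm0 : ((M i j : ℕ) : ℂ) ≠ 0 := by exact_mod_cast hm
  have : ((M i j : ℕ) : ℂ) * (2 * ((th M i j : ℝ) : ℂ) * Complex.I)
      = ((2 * Real.pi : ℝ) : ℂ) * Complex.I := by
    unfold th
    push_cast
    field_simp
  rw [this]
  push_cast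
  exact Complex.exp_two_pi_mul_I

theorem lam_ne_one (hm : 2 ≤ M i j) : lam M i j ≠ 1 := by
  unfold lam
  intro h
  obtain ⟨n, hn⟩ := Complex.exp_eq_one_iff.mp h
  have hI : (2 * ((th M i j : ℝ) : ℂ) * Complex.I) = (((2 * th M i j : ℝ)) : ℂ) * Complex.I := by
    push_cast; ring
  rw [hI] at hn
  have h' : ((2 * th M i j : ℝ) : ℂ) * Complex.I = ((n : ℂ) * (2 * (Real.pi : ℂ))) * Complex.I := by
    rw [hn]; ring
  have h2 : ((2 * th M i j : ℝ) : ℂ) = (n : ℂ) * (2 * (Real.pi : ℂ)) :=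
    mul_right_cancel₀ Complex.I_ne_zero h'
  have h3 : (2 * th M i j : ℝ) = (n : ℝ) * (2 * Real.pi) := by
    exact_mod_cast h2
  have hpos := th_pos M i j (by omega)
  have hlt := th_lt_pi M i j hm
  have hpi := Real.pi_pos
  -- 2θ = 2πn with 0 < θ < π : impossible for integer n
  rcases le_or_gt n 0 with hn0 | hn0
  · have : (n:ℝ) ≤ 0 := by exact_mod_cast hn0
    nlinarith
  · have : (1:ℝ) ≤ (n:ℝ) := by exact_mod_cast hn0
    nlinarith

theorem geom_zero (hm : 2 ≤ M i j) : (∑ r ∈ Finset.range (M i j), (lam M i j)^r) = 0 := by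
  have h := geom_sum_mul (lam M i j) (M i j)
  rw [lam_pow_M M i j (by omega), sub_self] at h
  rcases mul_eq_zero.mp h with h | h
  · exact h
  · exact absurd (sub_eq_zero.mp h) (lam_ne_one M i j hm)

theorem braid2 (hm : 2 ≤ M i j) : (DD M i j)^(M i j) = 1 := by
  apply LinearMap.ext
  intro v
  obtain ⟨x, y, h1, h2⟩ := DD_pow M i j (M i j) v
  rw [geom_zero M i j hm, zero_mul] at h2
  obtain ⟨hx, hy⟩ := om_inj M i j (ne_of_gt (ssn_pos M i j hm)) h2
  rw [h1, hx, hy]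
  simp

theorem a0b0_ee_i : ((a0 M i j (ee i) : ℝ) : ℂ) + ((b0 M i j (ee i) : ℝ) : ℂ) * om M i j
    = lam M i j - 1 := by
  rw [a0_ee_i, b0_ee_i]
  push_cast
  linear_combination idI1 M i j

theorem lam_pow_eq_one_dvd (hm : 2 ≤ M i j) (k : ℕ) (h : (lam M i j)^k = 1) : M i j ∣ k := by
  unfold lam at h
  rw [← Complex.exp_nat_mul] at h
  obtain ⟨n, hn⟩ := Complex.exp_eq_one_iff.mp h
  have h' : ((k * (2 * th M i j) : ℝ) : ℂ) * Complex.I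
      = ((n * (2 * Real.pi) : ℝ) : ℂ) * Complex.I := by
    push_cast at hn ⊢
    linear_combination hn
  have h2 : ((k * (2 * th M i j) : ℝ) : ℂ) = ((n * (2 * Real.pi) : ℝ) : ℂ) :=
    mul_right_cancel₀ Complex.I_ne_zero h'
  have h3 : (k : ℝ) * (2 * th M i j) = n * (2 * Real.pi) := by exact_mod_cast h2
  have hm0 : ((M i j : ℝ)) ≠ 0 := by
    have : M i j ≠ 0 := by omega
    exact_mod_cast this
  have hk : (k : ℝ) = (n : ℝ) * (M i j : ℝ) := by
    unfold th at h3
    field_simp at h3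
    nlinarith [Real.pi_pos, h3]
  have hk' : (k : ℤ) = n * (M i j : ℤ) := by exact_mod_cast hk
  have : (M i j : ℤ) ∣ (k : ℤ) := ⟨n, by linarith [hk']⟩
  exact_mod_cast this

theorem dvd2 (hij : i ≠ j) (hm : 2 ≤ M i j) (k : ℕ) (h : (DD M i j)^k = 1) : M i j ∣ k := by
  obtain ⟨x, y, h1, h2⟩ := DD_pow M i j k (ee i)
  rw [h, Module.End.one_apply] at h1
  have h0 : x • ee i + y • ee j = 0 := by
    have h1' : ee i = ee i + (x • ee i + y • ee j) := by rw [← add_assoc]; exact h1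
    exact (left_eq_add.mp h1')
  obtain ⟨hx, hy⟩ := comb_zero i j hij h0
  rw [hx, hy, a0b0_ee_i] at h2
  have h4 : (∑ r ∈ Finset.range k, (lam M i j)^r) * (lam M i j - 1) = 0 := by
    rw [← h2]; push_cast; ring
  rw [geom_sum_mul] at h4
  have h5 : (lam M i j)^k = 1 := by
    have := sub_eq_zero.mp h4
    exact this
  exact lam_pow_eq_one_dvd M i j hm k h5

theorem cc_neg_one (hm : M i j = 0) : cc M i j = -1 := by
  unfold cc km
  rw [hm]
  simp

theorem unip_pow (hm : M i j = 0) (t : ℕ) :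
    ((DD M i j)^t) (ee i) = ee i + (2*t : ℝ) • ee i + (2*t : ℝ) • ee j := by
  induction t with
  | zero => simp
  | succ t ih =>
    rw [pow_succ', Module.End.mul_apply, ih, map_add, map_add, map_smul, map_smul,
      DD_ee_i, DD_ee_j, cc_neg_one M i j hm]
    push_cast
    module

theorem unip (hij : i ≠ j) (hm : M i j = 0) (k : ℕ) (h : (DD M i j)^k = 1) : k = 0 := by
  have h1 := unip_pow M i j hm k
  rw [h, Module.End.one_apply] at h1
  have h0 : (2*k : ℝ) • ee i + (2*k : ℝ) • ee j = 0 := by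
    have h1' : ee i = ee i + ((2*k : ℝ) • ee i + (2*k : ℝ) • ee j) := by
      rw [← add_assoc]; exact h1
    exact (left_eq_add.mp h1')
  obtain ⟨hx, _⟩ := comb_zero i j hij h0
  have : (k : ℝ) = 0 := by linarith
  exact_mod_cast this

theorem order_dvd (hij : i ≠ j) (k : ℕ) (h : (DD M i j)^k = 1) : M i j ∣ k := by
  rcases Nat.lt_or_ge (M i j) 2 with hm | hm
  · have h1 : M i j ≠ 1 := M.off_diagonal i j hij
    have h0 : M i j = 0 := by omega
    rw [h0]
    have := unip M i j hij h0 k h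
    simp [this]
  · exact dvd2 M i j hij hm k h

theorem braid_all (i' j' : B) : (DD M i' j')^(M i' j') = 1 := by
  by_cases hij : i' = j'
  · subst hij
    rw [M.diagonal i', pow_one]
    exact rf_mul_self M i'
  · rcases Nat.lt_or_ge (M i' j') 2 with hm | hm
    · have h1 : M i' j' ≠ 1 := M.off_diagonal i' j' hij
      have h0 : M i' j' = 0 := by omega
      rw [h0, pow_zero]
    · exact braid2 M i' j' hm

end Plane

section Rep

variable {W : Type*} [Group W] (cs : CoxeterSystem M W)

theorem isLiftable_rf : CoxeterMatrix.IsLiftable M (fun i => rf M i) :=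
  fun i j => braid_all M i j

/-- The geometric (Tits) representation. -/
noncomputable def rho : W →* Module.End ℝ (B → ℝ) :=
  cs.lift ⟨fun i => rf M i, isLiftable_rf M⟩

theorem rho_simple (i : B) : rho M cs (cs.simple i) = rf M i :=
  cs.lift_apply_simple (isLiftable_rf M) i

theorem M_dvd_of_pow_eq_one (i j : B) (hij : i ≠ j) (k : ℕ)
    (h : ((cs.simple i) * (cs.simple j))^k = 1) : M i j ∣ k := by
  apply order_dvd M i j hij k
  have := congrArg (rho M cs) h
  rw [map_pow, map_mul, rho_simple, rho_simple, map_one] at this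
  exact this

variable (σB : Equiv.Perm B) (σI : W ≃* W)
variable (hσ : ∀ i : B, σI (cs.simple i) = cs.simple (σB i))

include hσ in
theorem M_inv : ∀ i j : B, M (σB i) (σB j) = M i j := by
  intro i j
  by_cases hij : i = j
  · subst hij; rw [M.diagonal, M.diagonal]
  · have hσij : σB i ≠ σB j := fun h => hij (σB.injective h)
    apply Nat.dvd_antisymm
    · apply M_dvd_of_pow_eq_one M cs (σB i) (σB j) hσij
      have := congrArg σI (cs.simple_mul_simple_pow i j)
      rw [map_pow, map_mul, hσ, hσ, map_one] at this
      exact this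
    · apply M_dvd_of_pow_eq_one M cs i j hij
      have hσ' : ∀ a : B, σI.symm (cs.simple a) = cs.simple (σB.symm a) := by
        intro a
        apply σI.injective
        rw [MulEquiv.apply_symm_apply, hσ, Equiv.apply_symm_apply]
      have := congrArg σI.symm (cs.simple_mul_simple_pow (σB i) (σB j))
      rw [map_pow, map_mul, hσ', hσ', map_one, Equiv.symm_apply_apply, Equiv.symm_apply_apply]
        at this
      exact this

end Rep

section Perm

/-- The permutation operator `(Pm g v) a = v (g⁻¹ a)`, so `Pm g (ee i) = ee (g i)`. -/
noncomputable def Pm (g : Equiv.Perm B) : Module.End ℝ (B → ℝ) where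
  toFun v := fun a => v (g.symm a)
  map_add' u v := rfl
  map_smul' t v := rfl

theorem Pm_apply (g : Equiv.Perm B) (v : B → ℝ) (a : B) : Pm g v a = v (g.symm a) := rfl

theorem Pm_ee (g : Equiv.Perm B) (i : B) : Pm g (ee i) = ee (g i) := by
  funext a
  rw [Pm_apply]
  unfold ee
  by_cases h : a = g i
  · rw [if_pos h, if_pos (by rw [h]; exact g.symm_apply_apply i)]
  · rw [if_neg h, if_neg (fun hh => h (by rw [← g.apply_symm_apply a, hh]))]

theorem Pm_Pm (g : Equiv.Perm B) (v : B → ℝ) : Pm g (Pm g.symm v) = v := by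
  funext a; rw [Pm_apply, Pm_apply, Equiv.symm_symm, Equiv.apply_symm_apply]

theorem Pm_Pm' (g : Equiv.Perm B) (v : B → ℝ) : Pm g.symm (Pm g v) = v := by
  funext a; rw [Pm_apply, Pm_apply, Equiv.symm_symm, Equiv.symm_apply_apply]

variable (σB : Equiv.Perm B)

theorem bf_Pm (hM : ∀ i j : B, M (σB i) (σB j) = M i j) (i : B) (v : B → ℝ) :
    bf M i (Pm σB.symm v) = bf M (σB i) v := by
  unfold bf
  rw [← Equiv.sum_comp σB (fun b => km M (σB i) b * v b)]
  apply Finset.sum_congr rfl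
  intro b _
  rw [Pm_apply, Equiv.symm_symm]
  congr 1
  unfold km
  rw [hM i b]

theorem rf_conj (hM : ∀ i j : B, M (σB i) (σB j) = M i j) (i : B) (v : B → ℝ) :
    rf M (σB i) v = Pm σB (rf M i (Pm σB.symm v)) := by
  funext a
  rw [Pm_apply, rf_apply, rf_apply, bf_Pm M σB hM i v, Pm_apply, Equiv.symm_symm]
  have hcond : (σB.symm a = i) ↔ (a = σB i) := by
    constructor
    · intro h; rw [← h, Equiv.apply_symm_apply]
    · intro h; rw [h, Equiv.symm_apply_apply]
  by_cases h : a = σB i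
  · rw [if_pos h, if_pos (hcond.mpr h), Equiv.apply_symm_apply]
  · rw [if_neg h, if_neg (fun hh => h (hcond.mp hh)), Equiv.apply_symm_apply]

variable {W : Type*} [Group W] (cs : CoxeterSystem M W)
variable (σI : W ≃* W)

theorem rho_conj_mul (hσ : ∀ i : B, σI (cs.simple i) = cs.simple (σB i)) (w : W) :
    rho M cs (σI w) * Pm σB = Pm σB * rho M cs w := by
  have hM := M_inv M cs σB σI hσ
  induction w using CoxeterSystem.simple_induction cs with
  | simple i =>
    rw [hσ, rho_simple, rho_simple]
    apply LinearMap.ext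
    intro v
    rw [Module.End.mul_apply, Module.End.mul_apply, rf_conj M σB hM i (Pm σB v), Pm_Pm']
  | one => simp
  | mul w w' hw hw' =>
    rw [map_mul, map_mul, mul_assoc, hw', ← mul_assoc, hw, mul_assoc, ← map_mul]

theorem rho_conj (hσ : ∀ i : B, σI (cs.simple i) = cs.simple (σB i)) (w : W) (v : B → ℝ) :
    rho M cs (σI w) (Pm σB v) = Pm σB (rho M cs w v) := by
  have h := congrArg (fun f : Module.End ℝ (B → ℝ) => f v) (rho_conj_mul M σB cs σI hσ w)
  simpa using h

end Perm

section Beta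

variable {W : Type*} [Group W] [Finite W] (cs : CoxeterSystem M W)

/-- The averaged (positive definite) bilinear form. -/
noncomputable def betaL : (B → ℝ) →ₗ[ℝ] (B → ℝ) →ₗ[ℝ] ℝ :=
  letI := Fintype.ofFinite W
  LinearMap.mk₂ ℝ (fun u v => ∑ w : W, ∑ a : B, rho M cs w u a * rho M cs w v a)
    (fun u u' v => by
      simp only [map_add, Pi.add_apply, add_mul, Finset.sum_add_distrib])
    (fun t u v => by
      simp only [map_smul, Pi.smul_apply, smul_eq_mul, Finset.mul_sum, mul_assoc])
    (fun u v v' => by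
      simp only [map_add, Pi.add_apply, mul_add, Finset.sum_add_distrib])
    (fun t u v => by
      simp only [map_smul, Pi.smul_apply, smul_eq_mul, Finset.mul_sum, mul_left_comm])

theorem betaL_apply (u v : B → ℝ) :
    betaL M cs u v =
      (letI := Fintype.ofFinite W; ∑ w : W, ∑ a : B, rho M cs w u a * rho M cs w v a) := rfl

theorem betaL_rho_invariant (g : W) (u v : B → ℝ) :
    betaL M cs (rho M cs g u) (rho M cs g v) = betaL M cs u v := by
  letI := Fintype.ofFinite W
  rw [betaL_apply, betaL_apply]
  apply Fintype.sum_equiv (Equiv.mulRight g)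
  intro w
  have h : ∀ z : B → ℝ, rho M cs w (rho M cs g z) = rho M cs (w * g) z := by
    intro z
    rw [map_mul, Module.End.mul_apply]
  rw [h u, h v]
  rfl

theorem betaL_pos (v : B → ℝ) (j0 : B) (hv1 : v j0 = 1) : 0 < betaL M cs v v := by
  letI := Fintype.ofFinite W
  rw [betaL_apply]
  apply Finset.sum_pos'
  · intro w _
    exact Finset.sum_nonneg (fun a _ => mul_self_nonneg _)
  · refine ⟨1, Finset.mem_univ 1, ?_⟩
    rw [map_one]
    apply Finset.sum_pos'
    · intro a _
      exact mul_self_nonneg _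
    · refine ⟨j0, Finset.mem_univ j0, ?_⟩
      simp [Module.End.one_apply, hv1]

theorem betaL_rf_eq (a : B) (v : B → ℝ) :
    betaL M cs (ee a) v = bf M a v * betaL M cs (ee a) (ee a) := by
  have h := betaL_rho_invariant M cs (cs.simple a) (ee a) v
  rw [rho_simple] at h
  have h1 : rf M a (ee a) = -(ee a) := rf_ee_self M a
  have h2 : rf M a v = v + (-(2 * bf M a v)) • ee a := rf_eq M a v
  rw [h1, h2] at h
  simp only [map_neg, map_add, map_smul, LinearMap.neg_apply, LinearMap.add_apply,
    LinearMap.smul_apply, smul_eq_mul] at h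
  -- h : -(betaL (ee a) v + (-(2 bf)) * betaL (ee a) (ee a)) = betaL (ee a) v
  linarith [h]

end Beta

section Main

variable {W : Type*} [Group W] [Finite W] (cs : CoxeterSystem M W)

theorem rho_word_support (l : List B) (v : B → ℝ) (a : B) (ha : a ∉ l) :
    rho M cs (cs.wordProd l) v a = v a := by
  induction l generalizing v with
  | nil => rw [CoxeterSystem.wordProd_nil, map_one, Module.End.one_apply]
  | cons i t ih =>
    rw [CoxeterSystem.wordProd_cons, map_mul, Module.End.mul_apply, rho_simple]
    have hai : a ≠ i := fun h => ha (h ▸ List.mem_cons_self)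
    have hat : a ∉ t := fun h => ha (List.mem_cons_of_mem i h)
    rw [rf_apply_ne M hai, ih _ hat]

theorem rho_inv_cancel (x : W) (v : B → ℝ) : rho M cs x⁻¹ (rho M cs x v) = v := by
  have : rho M cs x⁻¹ * rho M cs x = 1 := by
    rw [← map_mul, inv_mul_cancel, map_one]
  calc rho M cs x⁻¹ (rho M cs x v) = (rho M cs x⁻¹ * rho M cs x) v := rfl
  _ = v := by rw [this]; rfl

theorem rho_inv_cancel' (x : W) (v : B → ℝ) : rho M cs x (rho M cs x⁻¹ v) = v := by
  have : rho M cs x * rho M cs x⁻¹ = 1 := by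
    rw [← map_mul, mul_inv_cancel, map_one]
  calc rho M cs x (rho M cs x⁻¹ v) = (rho M cs x * rho M cs x⁻¹) v := rfl
  _ = v := by rw [this]; rfl

end Main

section Orbit

variable {σB : Equiv.Perm B}

theorem so_refl (σB : Equiv.Perm B) (a : B) : SameOrbit σB a a := ⟨0, rfl⟩

theorem so_symm {a b : B} (h : SameOrbit σB a b) : SameOrbit σB b a := by
  obtain ⟨n, hn⟩ := h
  exact ⟨-n, by rw [← hn, ← Equiv.Perm.mul_apply, ← zpow_add, neg_add_cancel, zpow_zero,
    Equiv.Perm.one_apply]⟩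

theorem so_trans {a b c : B} (h1 : SameOrbit σB a b) (h2 : SameOrbit σB b c) :
    SameOrbit σB a c := by
  obtain ⟨n, hn⟩ := h1
  obtain ⟨m, hm⟩ := h2
  exact ⟨m + n, by rw [← hm, ← hn, ← Equiv.Perm.mul_apply, ← zpow_add]⟩

theorem so_apply (a : B) : SameOrbit σB (σB a) a := by
  refine ⟨-1, ?_⟩
  rw [zpow_neg_one]
  exact σB.symm_apply_apply a

theorem so_symm_apply (a : B) : SameOrbit σB (σB.symm a) a := by
  exact ⟨1, by rw [zpow_one]; exact σB.apply_symm_apply a⟩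

theorem so_zpow (n : ℤ) (a : B) : SameOrbit σB ((σB ^ n) a) a := ⟨-n, by
  rw [← Equiv.Perm.mul_apply, ← zpow_add, neg_add_cancel, zpow_zero, Equiv.Perm.one_apply]⟩

end Orbit

section Core

variable {W : Type*} [Group W] [Finite W] (cs : CoxeterSystem M W)
variable (σB : Equiv.Perm B) (σI : W ≃* W)

/-- The core argument: if `σI x = x ⬝ π l'` where the letters of `l'` lie in pairwise
distinct `σB`-orbits, then `l'` is empty. -/
theorem main_core (hσ : ∀ i : B, σI (cs.simple i) = cs.simple (σB i))
    (l' : List B) (hnd : l'.Nodup)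
    (horb : ∀ a ∈ l', ∀ b ∈ l', SameOrbit σB a b → a = b)
    (x : W) (hσx : σI x = x * cs.wordProd l') : l' = [] := by
  by_contra hne
  have hM := M_inv M cs σB σI hσ
  -- inverse form of M-invariance
  have hM' : ∀ i j : B, M (σB.symm i) (σB.symm j) = M i j := by
    intro i j
    have := hM (σB.symm i) (σB.symm j)
    rw [Equiv.apply_symm_apply, Equiv.apply_symm_apply] at this
    exact this.symm
  have hMz : ∀ (n : ℤ) (i j : B), M ((σB ^ n) i) ((σB ^ n) j) = M i j := by
    intro n
    induction n using Int.induction_on with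
    | zero => simp
    | succ k ih =>
      intro i j
      have h1 : ∀ a : B, (σB ^ ((k : ℤ) + 1)) a = (σB ^ (k : ℤ)) (σB a) := by
        intro a
        rw [zpow_add_one, Equiv.Perm.mul_apply]
      rw [h1, h1, ih, hM]
    | pred k ih =>
      intro i j
      have h1 : ∀ a : B, (σB ^ (-(k : ℤ) - 1)) a = (σB ^ (-(k : ℤ))) (σB.symm a) := by
        intro a
        rw [zpow_sub_one, Equiv.Perm.mul_apply]
        rfl
      rw [h1, h1, ih, hM']
  set j0 := l'.getLast hne with hj0
  have hj0mem : j0 ∈ l' := List.getLast_mem hne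
  -- the orbit indicator function
  set f : B → ℝ := fun a => if SameOrbit σB a j0 then 1 else 0 with hf
  have hfj0 : f j0 = 1 := by rw [hf]; simp [so_refl]
  have hfinv : ∀ n : ℤ, ∀ b, f ((σB ^ n) b) = f b := by
    intro n b
    rw [hf]
    simp only
    by_cases h : SameOrbit σB b j0
    · rw [if_pos h, if_pos (so_trans (so_zpow n b) h)]
    · rw [if_neg h, if_neg (fun hh => h (so_trans (so_symm (so_zpow n b)) hh))]
  set P : Module.End ℝ (B → ℝ) := Pm σB with hPdef
  set C : Module.End ℝ (B → ℝ) := rho M cs (cs.wordProd l') with hCdef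
  have hPf : P f = f := by
    funext a
    rw [hPdef, Pm_apply]
    have := hfinv (-1) a
    rwa [zpow_neg_one] at this
  -- the intertwining relation
  have hrel : ∀ v, rho M cs x (C (P v)) = P (rho M cs x v) := by
    intro v
    have h := rho_conj M σB cs σI hσ x v
    rw [hσx, map_mul] at h
    exact h
  -- fixed spaces
  set Sp : Submodule ℝ (B → ℝ) := LinearMap.eqLocus P LinearMap.id with hSp
  set ScP : Submodule ℝ (B → ℝ) := LinearMap.eqLocus (C * P) LinearMap.id with hScP
  have hmemSp : ∀ v, v ∈ Sp ↔ P v = v := fun v => Iff.rfl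
  have hmemScP : ∀ v, v ∈ ScP ↔ C (P v) = v := fun v => Iff.rfl
  -- ScP ≤ Sp and moreover C fixes its elements
  have hle : ∀ v, C (P v) = v → (P v = v ∧ C v = v) := by
    intro v hv
    have hsupp : ∀ a, a ∉ l' → P v a = v a := by
      intro a ha
      conv_rhs => rw [← hv]
      rw [hCdef, rho_word_support M cs l' (P v) a ha]
    have horbsum : ∀ j : B, ∑ a ∈ Finset.univ.filter (fun a => SameOrbit σB a j), P v a
        = ∑ a ∈ Finset.univ.filter (fun a => SameOrbit σB a j), v a := by
      intro j
      apply Finset.sum_nbij' (fun a => σB.symm a) (fun a => σB a)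
      · intro a ha
        simp only [Finset.mem_filter, Finset.mem_univ, true_and] at ha ⊢
        exact so_trans (so_symm_apply a) ha
      · intro a ha
        simp only [Finset.mem_filter, Finset.mem_univ, true_and] at ha ⊢
        exact so_trans (so_apply a) ha
      · intro a _; exact σB.apply_symm_apply a
      · intro a _; exact σB.symm_apply_apply a
      · intro a _
        rw [hPdef, Pm_apply]
    have hdzero : ∀ a, v a = P v a := by
      intro a
      by_cases ha : a ∈ l'
      · have hsum := horbsum a
        have h1 : ∀ b ∈ Finset.univ.filter (fun b => SameOrbit σB b a), b ≠ a →
            P v b = v b := by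
          intro b hb hba
          simp only [Finset.mem_filter, Finset.mem_univ, true_and] at hb
          apply hsupp
          intro hbl
          exact hba (horb b hbl a ha hb)
        have hmema : a ∈ Finset.univ.filter (fun b => SameOrbit σB b a) := by
          simp only [Finset.mem_filter, Finset.mem_univ, true_and]
          exact so_refl σB a
        have h2 : ∑ b ∈ Finset.univ.filter (fun b => SameOrbit σB b a), (P v b - v b) = 0 := by
          rw [Finset.sum_sub_distrib, hsum, sub_self]
        rw [Finset.sum_eq_single_of_mem a hmema (fun b hb hba => by rw [h1 b hb hba, sub_self])]
          at h2
        linarith [h2]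
      · exact (hsupp a ha).symm
    have hPv : P v = v := by funext a; exact (hdzero a).symm
    refine ⟨hPv, ?_⟩
    have hcv : C v = C (P v) := by rw [hPv]
    rw [hcv]
    exact hv
  -- the linear equivalence given by rho x⁻¹
  set e : (B → ℝ) ≃ₗ[ℝ] (B → ℝ) := LinearEquiv.ofLinear (rho M cs x⁻¹) (rho M cs x)
    (LinearMap.ext (rho_inv_cancel M cs x)) (LinearMap.ext (rho_inv_cancel' M cs x)) with he
  have he_apply : ∀ v, e v = rho M cs x⁻¹ v := fun v => rfl
  have hmap : Sp.map (e : (B → ℝ) →ₗ[ℝ] (B → ℝ)) = ScP := by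
    apply _root_.le_antisymm
    · rintro _ ⟨u, hu, rfl⟩
      have hu' : P u = u := hu
      show (C * P) (e u) = LinearMap.id (e u)
      have h1 : rho M cs x (C (P (rho M cs x⁻¹ u))) = u := by
        rw [hrel (rho M cs x⁻¹ u), rho_inv_cancel' M cs x u, hu']
      have h2 : C (P (rho M cs x⁻¹ u)) = rho M cs x⁻¹ u := by
        calc C (P (rho M cs x⁻¹ u)) = rho M cs x⁻¹ (rho M cs x (C (P (rho M cs x⁻¹ u)))) :=
          (rho_inv_cancel M cs x _).symm
        _ = rho M cs x⁻¹ u := by rw [h1]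
      exact h2
    · intro v hv
      have hv' : C (P v) = v := hv
      refine ⟨rho M cs x v, ?_, ?_⟩
      · show P (rho M cs x v) = LinearMap.id (rho M cs x v)
        show P (rho M cs x v) = rho M cs x v
        rw [← hrel v, hv']
      · show e (rho M cs x v) = v
        rw [he_apply, rho_inv_cancel M cs x]
  have hrank : Module.finrank ℝ ScP = Module.finrank ℝ Sp := by
    rw [← hmap]
    exact LinearEquiv.finrank_map_eq e Sp
  have hle' : ScP ≤ Sp := by
    intro v hv
    exact (hle v hv).1
  have heqS : ScP = Sp := Submodule.eq_of_le_of_finrank_le hle' (le_of_eq hrank.symm)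
  have hfSp : f ∈ Sp := hPf
  have hfScP : f ∈ ScP := by rw [heqS]; exact hfSp
  have hCf : C f = f := (hle f hfScP).2
  -- orthogonality at the last letter
  have hbf0 : bf M j0 f = 0 := by
    set t : List B := l'.dropLast with ht
    have hsplit : t ++ [j0] = l' := List.dropLast_append_getLast hne
    have hj0t : j0 ∉ t := by
      have hnd' : (t ++ [j0]).Nodup := by rw [hsplit]; exact hnd
      have hdisj := (List.nodup_append'.mp hnd').2.2
      intro hmem
      exact hdisj hmem (List.mem_singleton_self j0)
    have hC' : ∀ w, C w = rho M cs (cs.wordProd t) (rf M j0 w) := by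
      intro w
      rw [hCdef, ← hsplit, CoxeterSystem.wordProd_append, CoxeterSystem.wordProd_singleton,
        map_mul, rho_simple, Module.End.mul_apply]
    have h1 : f j0 = f j0 - 2 * bf M j0 f := by
      conv_lhs => rw [← hCf]
      rw [hC' f, rho_word_support M cs t (rf M j0 f) j0 hj0t, rf_apply_self]
    linarith
  -- orthogonality along the whole orbit
  have hbfall : ∀ a, SameOrbit σB a j0 → bf M a f = 0 := by
    intro a ⟨n, hn⟩
    have hz : ∀ b : B, (σB ^ n) ((σB ^ (-n : ℤ)) b) = b := by
      intro b
      rw [← Equiv.Perm.mul_apply, ← zpow_add, add_neg_cancel, zpow_zero, Equiv.Perm.one_apply]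
    have hsum : bf M j0 f = bf M a f := by
      unfold bf
      apply Fintype.sum_equiv ((σB ^ (-n : ℤ) : Equiv.Perm B) : Equiv B B)
      intro b
      have h1 : km M a ((σB ^ (-n : ℤ)) b) = km M j0 b := by
        unfold km
        rw [← hn, ← hMz n a ((σB ^ (-n : ℤ)) b), hz b]
      rw [h1, hfinv (-n : ℤ) b]
    rw [← hsum, hbf0]
  -- the contradiction via the positive definite form
  set Orb : Finset B := Finset.univ.filter (fun a => SameOrbit σB a j0) with hOrb
  have hfsum : f = ∑ a ∈ Orb, ee a := by
    funext b
    have h1 : (∑ a ∈ Orb, ee a) b = ∑ a ∈ Orb, (if b = a then (1:ℝ) else 0) := by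
      rw [Finset.sum_apply]
      rfl
    rw [h1, Finset.sum_ite_eq Orb b (fun _ => (1:ℝ))]
    rw [hOrb, hf]
    simp only [Finset.mem_filter, Finset.mem_univ, true_and]
  have hzero : betaL M cs f f = 0 := by
    nth_rewrite 1 [hfsum]
    rw [map_sum, LinearMap.sum_apply]
    apply Finset.sum_eq_zero
    intro a ha
    rw [hOrb, Finset.mem_filter] at ha
    rw [betaL_rf_eq, hbfall a ha.2, zero_mul]
  have hpos := betaL_pos M cs f j0 hfj0
  linarith

end Core
end Stmt15Aux

open Classical in
/-- Let `W_e` be a finite Coxeter group with diagram automorphism `σ_I`, let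
`K ⊆ Δ_e` be `σ_I`-stable with `c₂` a `σ_I`-Coxeter element of `W_K` (reduced word `l₂`
with letters in `K` hitting each `σ_I`-orbit on `K` exactly once).  If `x` is a
minimal-length right coset representative (`x ∈ {}^{K'}W_e` for some `K'`) with
`σ_I(x) = x c₂'` where `c₂' ≤ c₂` is a partial `σ_I`-Coxeter element (the product of a
subword of `l₂`), then `c₂' = 1` and `σ_I(x) = x`. -/
theorem stmt15 {B : Type*} [Fintype B] {W : Type*} [Group W] [Finite W]
    {M : CoxeterMatrix B} (cs : CoxeterSystem M W)
    (σB : Equiv.Perm B) (σI : W ≃* W)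
    (hσ : ∀ i, σI (cs.simple i) = cs.simple (σB i))
    (K : Set B) (hKstab : ∀ i ∈ K, σB i ∈ K)
    (l₂ : List B) (hl₂K : ∀ i ∈ l₂, i ∈ K) (hl₂red : cs.IsReduced l₂)
    (hl₂orb : ∀ j ∈ K, l₂.countP (fun i => decide (SameOrbit σB i j)) = 1)
    (c₂ : W) (hc₂ : c₂ = cs.wordProd l₂)
    -- c₂' ≤ c₂ is a partial σ_I-Coxeter element: the product of a subword of l₂
    (c₂' : W) (hc₂' : ∃ l' : List B, l'.Sublist l₂ ∧ c₂' = cs.wordProd l')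
    -- x is a minimal length representative of the coset W_{K'} x
    (K' : Set B) (x : W)
    (hx : ∀ u ∈ Subgroup.closure (cs.simple '' K'), cs.length x ≤ cs.length (u * x))
    (hσx : σI x = x * c₂') :
    c₂' = 1 ∧ σI x = x := by
  classical
  obtain ⟨l', hsub, hc⟩ := hc₂'
  -- letters of l' lie in pairwise distinct σB-orbits
  have horb : ∀ a ∈ l', ∀ b ∈ l', SameOrbit σB a b → a = b := by
    intro a ha b hb hab
    by_contra hne
    have hbK : b ∈ K := hl₂K b (hsub.subset hb)
    set p : B → Bool := fun i => decide (SameOrbit σB i b) with hp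
    have h2 : 2 ≤ l₂.countP p := by
      have hamem : a ∈ l₂.filter p := by
        rw [List.mem_filter]
        exact ⟨hsub.subset ha, by rw [hp]; exact decide_eq_true hab⟩
      have hbmem : b ∈ l₂.filter p := by
        rw [List.mem_filter]
        exact ⟨hsub.subset hb, by rw [hp]; exact decide_eq_true (Stmt15Aux.so_refl σB b)⟩
      have hsub2 : ({a, b} : Finset B) ⊆ (l₂.filter p).toFinset := by
        intro z hz
        rw [Finset.mem_insert, Finset.mem_singleton] at hz
        rw [List.mem_toFinset]
        rcases hz with rfl | rfl
        · exact hamem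
        · exact hbmem
      calc 2 = ({a, b} : Finset B).card := (Finset.card_pair hne).symm
      _ ≤ (l₂.filter p).toFinset.card := Finset.card_le_card hsub2
      _ ≤ (l₂.filter p).length := List.toFinset_card_le _
      _ = l₂.countP p := List.countP_eq_length_filter.symm
    rw [hl₂orb b hbK] at h2
    omega
  -- l' has no duplicates
  have hnd : l'.Nodup := by
    rw [List.nodup_iff_count_le_one]
    intro a
    by_cases ha : a ∈ l'
    · have haK : a ∈ K := hl₂K a (hsub.subset ha)
      calc l'.count a ≤ l₂.count a := hsub.count_le a
      _ ≤ l₂.countP (fun i => decide (SameOrbit σB i a)) := by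
          apply List.countP_mono_left
          intro z _ hz
          exact decide_eq_true (by rw [eq_of_beq hz]; exact Stmt15Aux.so_refl σB a)
      _ = 1 := hl₂orb a haK
    · rw [List.count_eq_zero_of_not_mem ha]
      omega
  have hnil : l' = [] := by
    apply Stmt15Aux.main_core M cs σB σI hσ l' hnd horb x
    rw [← hc]
    exact hσx
  have hone : c₂' = 1 := by
    rw [hc, hnil, CoxeterSystem.wordProd_nil]
  exact ⟨hone, by rw [hσx, hone, mul_one]⟩
end

section
/- Let W be a finite Weyl group with simple roots Δ, σ a diagram automorphism, c = s_{α_1}⋯s_{α_r} a σ-Coxeter element (α_i representing σ-orbits), and let α = α_j with σ-orbit O of size δ. Then for each 0 ≤ i ≤ δ−1, one can write (cσ)^i = u_i σ^i with u_i ∈ W and supp(u_i) ⊆ S \ {s_{σ^i(α_j)}}, i.e., the simple reflection s_{σ^i(α_j)} does not occur in any reduced expression of u_i. -/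
open CoxeterSystem Real

namespace Stmt16Aux

variable {B : Type*} [Fintype B] [DecidableEq B]

noncomputable def geomBil (M : CoxeterMatrix B) (i : B) : (B → ℝ) →ₗ[ℝ] ℝ where
  toFun x := ∑ l : B, (-Real.cos (Real.pi / M i l)) * x l
  map_add' x y := by simp [mul_add, Finset.sum_add_distrib]
  map_smul' r x := by
    simp only [Pi.smul_apply, smul_eq_mul, RingHom.id_apply, Finset.mul_sum]
    congr 1; ext l; ring

noncomputable def geomRefl (M : CoxeterMatrix B) (i : B) : Module.End ℝ (B → ℝ) where
  toFun x := x - (2 * geomBil M i x) • (Pi.single i 1 : B → ℝ)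
  map_add' x y := by
    simp only [map_add]
    module
  map_smul' r x := by
    simp only [map_smul, RingHom.id_apply, smul_eq_mul]
    module

theorem geomBil_single (M : CoxeterMatrix B) (i j : B) :
    geomBil M i (Pi.single j 1) = -Real.cos (Real.pi / M i j) := by
  simp only [geomBil, LinearMap.coe_mk, AddHom.coe_mk]
  rw [Finset.sum_eq_single j]
  · simp
  · intro b _ hb
    rw [Pi.single_eq_of_ne hb]; ring
  · simp

theorem geomRefl_apply (M : CoxeterMatrix B) (i : B) (x : B → ℝ) :
    geomRefl M i x = x - (2 * geomBil M i x) • (Pi.single i 1 : B → ℝ) := rfl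

private theorem sin_shift2 (θ x : ℝ) :
    2 * Real.cos θ * Real.sin x - Real.sin (x - θ) = Real.sin (x + θ) := by
  rw [Real.sin_sub, Real.sin_add]; ring

private theorem sin_shift (θ x : ℝ) :
    (4 * Real.cos θ ^ 2 - 1) * Real.sin x - 2 * Real.cos θ * Real.sin (x - θ)
      = Real.sin (x + 2 * θ) := by
  rw [Real.sin_sub, Real.sin_add, Real.cos_two_mul, Real.sin_two_mul]; ring

theorem geomLiftable (M : CoxeterMatrix B) : M.IsLiftable (fun i => geomRefl M i) := by
  intro i j
  rcases eq_or_ne i j with rfl | hij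
  · rw [M.diagonal, pow_one]
    apply LinearMap.ext; intro x
    have h1 : geomBil M i (Pi.single i 1) = 1 := by
      rw [geomBil_single, M.diagonal]; simp
    simp only [Module.End.mul_apply, Module.End.one_apply, geomRefl_apply, map_sub, map_smul,
      h1, smul_eq_mul, mul_one]
    module
  rcases eq_or_ne (M i j) 0 with h0 | h0
  · rw [h0, pow_zero]
  -- main case : m ≥ 2
  set m := M i j with hm
  have hm1 : m ≠ 1 := M.off_diagonal i j hij
  have hm2 : 2 ≤ m := by omega
  set θ : ℝ := Real.pi / m with hθ
  set c : ℝ := Real.cos θ with hc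
  have hmR : (2:ℝ) ≤ (m:ℝ) := by exact_mod_cast hm2
  have hθpos : 0 < θ := by
    apply div_pos Real.pi_pos; linarith
  have hθlt : θ < Real.pi := by
    rw [hθ, div_lt_iff₀ (by linarith : (0:ℝ) < m)]
    nlinarith [Real.pi_pos]
  have hs : 0 < Real.sin θ := Real.sin_pos_of_pos_of_lt_pi hθpos hθlt
  set ei : B → ℝ := Pi.single i 1 with hei
  set ej : B → ℝ := Pi.single j 1 with hej
  have hBii : geomBil M i ei = 1 := by rw [hei, geomBil_single, M.diagonal]; simp
  have hBjj : geomBil M j ej = 1 := by rw [hej, geomBil_single, M.diagonal]; simp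
  have hBij : geomBil M i ej = -c := by rw [hej, geomBil_single, ← hm]
  have hBji : geomBil M j ei = -c := by
    rw [hei, geomBil_single, M.symmetric j i, ← hm]
  set g := geomRefl M i * geomRefl M j with hg
  have inner1 : geomRefl M j ei = ei + (2*c) • ej := by
    rw [geomRefl_apply, hBji, ← hej]
    module
  have inner2 : geomRefl M j ej = ej - (2:ℝ) • ej := by
    rw [geomRefl_apply, hBjj, ← hej]
    module
  have hgei : g ei = (4*c^2 - 1) • ei + (2*c) • ej := by
    rw [hg, Module.End.mul_apply, inner1, geomRefl_apply, map_add, map_smul, hBii, hBij, ← hei]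
    simp only [smul_eq_mul]
    module
  have hgej : g ej = (-(2*c)) • ei + (-1 : ℝ) • ej := by
    rw [hg, Module.End.mul_apply, inner2, geomRefl_apply, map_sub, map_smul, hBij, ← hei]
    simp only [smul_eq_mul]
    module
  have key : ∀ r : ℕ,
      Real.sin θ • ((g ^ r) ei)
        = Real.sin (θ * (2*(r:ℝ)+1)) • ei + Real.sin (θ * (2*(r:ℝ))) • ej
      ∧ Real.sin θ • ((g ^ r) ej)
        = (-Real.sin (θ * (2*(r:ℝ)))) • ei + (-Real.sin (θ * (2*(r:ℝ)) - θ)) • ej := by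
    intro r
    induction r with
    | zero =>
      constructor
      · norm_num
      · norm_num [Real.sin_neg]
    | succ r ih =>
      obtain ⟨ih1, ih2⟩ := ih
      have hA : Real.sin (θ * (2*((r:ℝ)+1)+1))
          = (4*c^2 - 1) * Real.sin (θ * (2*(r:ℝ)+1)) - 2*c*Real.sin (θ * (2*(r:ℝ))) := by
        have h := sin_shift θ (θ * (2*(r:ℝ)+1))
        rw [show θ * (2*(r:ℝ)+1) - θ = θ * (2*(r:ℝ)) by ring,
          show θ * (2*(r:ℝ)+1) + 2*θ = θ * (2*((r:ℝ)+1)+1) by ring] at h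
        linarith
      have hB : Real.sin (θ * (2*((r:ℝ)+1)))
          = 2*c*Real.sin (θ * (2*(r:ℝ)+1)) - Real.sin (θ * (2*(r:ℝ))) := by
        have h := sin_shift2 θ (θ * (2*(r:ℝ)+1))
        rw [show θ * (2*(r:ℝ)+1) - θ = θ * (2*(r:ℝ)) by ring,
          show θ * (2*(r:ℝ)+1) + θ = θ * (2*((r:ℝ)+1)) by ring] at h
        linarith
      have hC : Real.sin (θ * (2*((r:ℝ)+1)))
          = (4*c^2 - 1) * Real.sin (θ * (2*(r:ℝ))) - 2*c*Real.sin (θ * (2*(r:ℝ)) - θ) := by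
        have h := sin_shift θ (θ * (2*(r:ℝ)))
        rw [show θ * (2*(r:ℝ)) + 2*θ = θ * (2*((r:ℝ)+1)) by ring] at h
        linarith
      have hD : Real.sin (θ * (2*((r:ℝ)+1)) - θ)
          = 2*c*Real.sin (θ * (2*(r:ℝ))) - Real.sin (θ * (2*(r:ℝ)) - θ) := by
        have h := sin_shift2 θ (θ * (2*(r:ℝ)))
        rw [show θ * (2*(r:ℝ)) + θ = θ * (2*((r:ℝ)+1)) - θ by ring] at h
        linarith
      have hcast : ((r+1 : ℕ) : ℝ) = (r:ℝ) + 1 := by push_cast; ring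
      constructor
      · rw [pow_succ', Module.End.mul_apply, ← map_smul, ih1, map_add, map_smul, map_smul,
          hgei, hgej, hcast, hA, hB]
        module
      · rw [pow_succ', Module.End.mul_apply, ← map_smul, ih2, map_add, map_smul, map_smul,
          hgei, hgej, hcast, hC, hD]
        module
  have hm0R : (m:ℝ) ≠ 0 := by positivity
  have h2m : θ * (2*(m:ℝ)) = 2 * Real.pi := by
    rw [hθ]; field_simp
  have hsin2m : Real.sin (θ * (2*(m:ℝ))) = 0 := by rw [h2m, Real.sin_two_pi]
  have hsin2m1 : Real.sin (θ * (2*(m:ℝ)) + θ) = Real.sin θ := by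
    rw [h2m, add_comm, Real.sin_add_two_pi]
  have hsin2msub : Real.sin (θ * (2*(m:ℝ)) - θ) = -Real.sin θ := by
    rw [h2m, Real.sin_sub, Real.sin_two_pi, Real.cos_two_pi]; ring
  obtain ⟨k1, k2⟩ := key m
  have hgmei : (g ^ m) ei = ei := by
    apply smul_right_injective (B → ℝ) (ne_of_gt hs)
    show Real.sin θ • (g ^ m) ei = Real.sin θ • ei
    rw [k1, show θ * (2*(m:ℝ)+1) = θ * (2*(m:ℝ)) + θ by ring, hsin2m1, hsin2m]
    simp
  have hgmej : (g ^ m) ej = ej := by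
    apply smul_right_injective (B → ℝ) (ne_of_gt hs)
    show Real.sin θ • (g ^ m) ej = Real.sin θ • ej
    rw [k2, hsin2m, hsin2msub]
    simp
  -- now a general vector
  apply LinearMap.ext; intro x
  have hs2 : Real.sin θ ^ 2 = 1 - c^2 := by
    have := Real.sin_sq_add_cos_sq θ; rw [← hc] at this; linarith
  have hs2ne : Real.sin θ ^ 2 ≠ 0 := pow_ne_zero 2 (ne_of_gt hs)
  set P := geomBil M i x with hP
  set Q := geomBil M j x with hQ
  set α : ℝ := (P + c*Q)/(Real.sin θ^2) with hα
  set β : ℝ := (Q + c*P)/(Real.sin θ^2) with hβ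
  set y : B → ℝ := x - α • ei - β • ej with hy
  have hyi : geomBil M i y = 0 := by
    rw [hy]
    simp only [map_sub, map_smul, hBii, hBij, ← hP, smul_eq_mul, mul_one]
    rw [hα, hβ]
    field_simp
    rw [hs2]; ring
  have hyj : geomBil M j y = 0 := by
    rw [hy]
    simp only [map_sub, map_smul, hBji, hBjj, ← hQ, smul_eq_mul, mul_one]
    rw [hα, hβ]
    field_simp
    rw [hs2]; ring
  have hgy : g y = y := by
    have j1 : geomRefl M j y = y := by
      rw [geomRefl_apply, hyj]; simp
    rw [hg, Module.End.mul_apply, j1, geomRefl_apply, hyi]; simp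
  have hgmy : (g ^ m) y = y := by
    induction m with
    | zero => simp
    | succ n ihn => rw [pow_succ, Module.End.mul_apply, hgy, ihn]
  have hx : x = y + α • ei + β • ej := by rw [hy]; module
  rw [Module.End.one_apply, hx]
  simp only [map_add, map_smul, hgmy, hgmei, hgmej]

theorem simple_inj {W : Type*} [Group W] {M : CoxeterMatrix B} (cs : CoxeterSystem M W)
    {b k : B} (h : cs.simple b = cs.simple k) : b = k := by
  by_contra hbk
  have hb := cs.lift_apply_simple (geomLiftable M) b
  have hk := cs.lift_apply_simple (geomLiftable M) k
  rw [h, hk] at hb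
  -- hb : geomRefl M k = geomRefl M b
  have hval1 : (geomRefl M b) (Pi.single b 1) b = -1 := by
    rw [geomRefl_apply, geomBil_single, M.diagonal]
    simp [Real.cos_pi]
    norm_num
  have hval2 : (geomRefl M k) (Pi.single b 1) b = 1 := by
    rw [geomRefl_apply, geomBil_single]
    simp [Pi.single_eq_of_ne hbk]
  rw [hb, hval1] at hval2
  norm_num at hval2


end Stmt16Aux

namespace Stmt16Aux2

variable {B : Type*} {W : Type*} [Group W] {M : CoxeterMatrix B} (cs : CoxeterSystem M W)

open Classical in
/-- The permutation action of the generators on `W × ZMod 2` tracking parity of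
reflection occurrences. -/
noncomputable def etaP (i : B) : Function.End (W × ZMod 2) :=
  fun p => (cs.simple i * p.1 * cs.simple i, p.2 + if p.1 = cs.simple i then 1 else 0)

theorem endMul_apply {α : Type*} (f g : Function.End α) (x : α) :
    (f * g) x = f (g x) := rfl

theorem endOne_apply {α : Type*} (x : α) : (1 : Function.End α) x = x := rfl

open Classical in
theorem etaP_liftable : M.IsLiftable (fun i => etaP cs i) := by
  classical
  intro i j
  set p0 := cs.simple i * cs.simple j with hp0
  have hp0inv : p0⁻¹ = cs.simple j * cs.simple i := by
    rw [hp0, mul_inv_rev, cs.inv_simple, cs.inv_simple]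
  have hsjsisj : cs.simple j * cs.simple i * cs.simple j = cs.simple j * p0 := by
    rw [hp0]; group
  have hselfj : cs.simple j * cs.simple j = 1 := cs.simple_mul_simple_self j
  have hconj : ∀ k : ℕ, (p0 ^ k)⁻¹ * cs.simple j * p0 ^ k = cs.simple j * p0 ^ (2*k) := by
    intro k
    induction k with
    | zero => simp
    | succ k ih =>
      have h1 : (p0 ^ (k+1))⁻¹ * cs.simple j * p0 ^ (k+1)
          = p0⁻¹ * ((p0 ^ k)⁻¹ * cs.simple j * p0 ^ k) * p0 := by
        rw [pow_succ]; group
      rw [h1, ih, hp0inv]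
      have h2 : cs.simple j * cs.simple i * (cs.simple j * p0 ^ (2*k)) * p0
          = (cs.simple j * cs.simple i * cs.simple j) * p0 ^ (2*k) * p0 := by group
      rw [h2, hsjsisj, show 2*(k+1) = 2*k + 1 + 1 by ring, pow_succ, pow_succ]
      group
  have hconj2 : ∀ k : ℕ, (p0 ^ k)⁻¹ * (cs.simple j * cs.simple i * cs.simple j) * p0 ^ k
      = cs.simple j * p0 ^ (2*k+1) := by
    intro k
    rw [hsjsisj, show (p0 ^ k)⁻¹ * (cs.simple j * p0) * p0 ^ k
        = ((p0 ^ k)⁻¹ * cs.simple j * p0 ^ k) * ((p0 ^ k)⁻¹ * p0 * p0 ^ k) by group, hconj]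
    have h3 : (p0 ^ k)⁻¹ * p0 * p0 ^ k = p0 := by group
    rw [h3, pow_succ]
    group
  have claim : ∀ (r : ℕ) (t : W) (z : ZMod 2),
      ((etaP cs i * etaP cs j) ^ r) (t, z)
        = (p0 ^ r * t * (p0 ^ r)⁻¹,
            z + ∑ k ∈ Finset.range (2*r), (if t = cs.simple j * p0 ^ k then 1 else 0)) := by
    intro r
    induction r with
    | zero =>
      intro t z
      rw [pow_zero, endOne_apply]
      simp
    | succ r ih =>
      intro t z
      rw [pow_succ', endMul_apply, ih, endMul_apply]
      set T := p0 ^ r * t * (p0 ^ r)⁻¹ with hT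
      show ((etaP cs i) (etaP cs j (T, _))) = _
      rw [etaP, etaP]
      simp only [Prod.mk.injEq]
      refine ⟨?_, ?_⟩
      · show cs.simple i * (cs.simple j * T * cs.simple j) * cs.simple i
            = p0 ^ (r+1) * t * (p0 ^ (r+1))⁻¹
        have h4 : cs.simple i * (cs.simple j * T * cs.simple j) * cs.simple i
            = p0 * T * p0⁻¹ := by
          rw [hp0, hp0inv]; group
        rw [h4, hT, pow_succ']
        group
      · show z + (∑ k ∈ Finset.range (2*r), (if t = cs.simple j * p0 ^ k then 1 else 0))
            + (if T = cs.simple j then 1 else 0)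
            + (if cs.simple j * T * cs.simple j = cs.simple i then 1 else 0)
          = z + ∑ k ∈ Finset.range (2*(r+1)), (if t = cs.simple j * p0 ^ k then 1 else 0)
        have c1 : (T = cs.simple j) = (t = cs.simple j * p0 ^ (2*r)) := by
          apply propext; constructor
          · intro h
            have h5 : t = (p0 ^ r)⁻¹ * cs.simple j * p0 ^ r := by rw [← h, hT]; group
            rwa [hconj] at h5
          · intro h
            rw [hT, h, ← hconj]; group
        have c2 : (cs.simple j * T * cs.simple j = cs.simple i)
            = (t = cs.simple j * p0 ^ (2*r+1)) := by
          apply propext; constructor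
          · intro h
            have h6 : T = cs.simple j * cs.simple i * cs.simple j := by
              rw [← h, show cs.simple j * (cs.simple j * T * cs.simple j) * cs.simple j
                = (cs.simple j * cs.simple j) * T * (cs.simple j * cs.simple j) by group,
                hselfj, one_mul, mul_one]
            have h7 : t = (p0 ^ r)⁻¹ * (cs.simple j * cs.simple i * cs.simple j) * p0 ^ r := by
              rw [← h6, hT]; group
            rwa [hconj2] at h7
          · intro h
            have h8 : T = cs.simple j * cs.simple i * cs.simple j := by
              rw [hT, h, ← hconj2]; group
            rw [h8, show cs.simple j * (cs.simple j * cs.simple i * cs.simple j) * cs.simple j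
              = (cs.simple j * cs.simple j) * cs.simple i * (cs.simple j * cs.simple j) by group,
              hselfj, one_mul, mul_one]
        rw [c1, c2, show 2*(r+1) = 2*r + 1 + 1 by ring, Finset.sum_range_succ,
          Finset.sum_range_succ]
        abel
  have hp0m : p0 ^ (M i j) = 1 := cs.simple_mul_simple_pow i j
  apply funext
  rintro ⟨t, z⟩
  rw [claim (M i j) t z, hp0m]
  set m := M i j with hm
  set f : ℕ → ZMod 2 := fun k => if t = cs.simple j * p0 ^ k then 1 else 0 with hf
  have hper : ∀ k, f (m + k) = f k := by
    intro k
    simp only [hf, pow_add, hp0m, one_mul]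
  have hsum : ∑ k ∈ Finset.range (2*m), f k = 0 := by
    have h1 : ∑ k ∈ Finset.range (2*m), f k
        = ∑ k ∈ Finset.range m, f k + ∑ k ∈ Finset.Ico m (m+m), f k := by
      rw [two_mul, Finset.range_eq_Ico,
        ← Finset.sum_Ico_consecutive f (Nat.zero_le m) (Nat.le_add_right m m),
        ← Finset.range_eq_Ico]
    have h2 : ∑ k ∈ Finset.Ico m (m+m), f k = ∑ k ∈ Finset.range m, f k := by
      rw [Finset.sum_Ico_eq_sum_range]
      have hmm : m + m - m = m := by omega
      rw [hmm]
      exact Finset.sum_congr rfl (fun k _ => hper k)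
    rw [h1, h2]
    exact CharTwo.add_self_eq_zero _
  rw [hsum, endOne_apply]
  simp

open Classical in
/-- number of occurrences of `t` in a list of elements of `W` -/
noncomputable def cnt (t : W) (L : List W) : ℕ := L.countP (fun x => decide (x = t))

open Classical in
theorem parity_lemma : ∀ (ω : List B) (t : W) (z : ZMod 2),
    (cs.lift ⟨fun i => etaP cs i, etaP_liftable cs⟩ (cs.wordProd ω)) (t, z)
      = (cs.wordProd ω * t * (cs.wordProd ω)⁻¹,
          z + (cnt t (cs.rightInvSeq ω) : ZMod 2)) := by
  classical
  intro ω
  induction ω with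
  | nil =>
    intro t z
    simp only [wordProd_nil, map_one, endOne_apply, cnt, rightInvSeq]
    simp
  | cons i ω ih =>
    intro t z
    rw [wordProd_cons, map_mul, endMul_apply, ih, cs.lift_apply_simple, etaP]
    have hris : cs.rightInvSeq (i :: ω)
        = ((cs.wordProd ω)⁻¹ * cs.simple i * cs.wordProd ω) :: cs.rightInvSeq ω := rfl
    rw [hris]
    simp only [Prod.mk.injEq]
    set q := cs.wordProd ω with hq
    refine ⟨by rw [mul_inv_rev, cs.inv_simple]; group, ?_⟩
    have hcond : ((q⁻¹ * cs.simple i * q) = t) = (q * t * q⁻¹ = cs.simple i) := by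
      apply propext; constructor
      · intro h; rw [← h]; group
      · intro h; rw [← h]; group
    have hcnt : cnt t ((q⁻¹ * cs.simple i * q) :: cs.rightInvSeq ω)
        = cnt t (cs.rightInvSeq ω) + (if q * t * q⁻¹ = cs.simple i then 1 else 0) := by
      rw [cnt, List.countP_cons, ← hcond, cnt]
      simp
    rw [hcnt]
    push_cast
    rw [add_assoc]

open Classical in
theorem parity_invariant {ω ω' : List B} (h : cs.wordProd ω = cs.wordProd ω') (t : W) :
    ((cnt t (cs.rightInvSeq ω) : ZMod 2)) = (cnt t (cs.rightInvSeq ω') : ZMod 2) := by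
  have h1 := parity_lemma cs ω t 0
  have h2 := parity_lemma cs ω' t 0
  rw [h] at h1
  have h3 := congrArg Prod.snd (h1.symm.trans h2)
  simpa using h3

theorem ris_append (κ κ' : List B) :
    cs.rightInvSeq (κ ++ κ')
      = (cs.rightInvSeq κ).map
          (fun E => (cs.wordProd κ')⁻¹ * E * cs.wordProd κ') ++ cs.rightInvSeq κ' := by
  induction κ with
  | nil => simp
  | cons i κ ih =>
    have h1 : cs.rightInvSeq (i :: (κ ++ κ'))
        = ((cs.wordProd (κ ++ κ'))⁻¹ * cs.simple i * cs.wordProd (κ ++ κ'))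
            :: cs.rightInvSeq (κ ++ κ') := rfl
    have h2 : cs.rightInvSeq (i :: κ)
        = ((cs.wordProd κ)⁻¹ * cs.simple i * cs.wordProd κ) :: cs.rightInvSeq κ := rfl
    rw [List.cons_append, h1, ih, h2, List.map_cons, List.cons_append]
    congr 1
    rw [cs.wordProd_append, mul_inv_rev]
    group

open Classical in
theorem palindrome_odd : ∀ (ρ : List B) (b : B),
    ((cnt (cs.wordProd ρ * cs.simple b * (cs.wordProd ρ)⁻¹)
        (cs.rightInvSeq (ρ ++ b :: ρ.reverse)) : ℕ) : ZMod 2) = 1 := by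
  classical
  intro ρ
  induction ρ with
  | nil =>
    intro b
    simp only [List.nil_append, List.reverse_nil, wordProd_nil, one_mul, inv_one, mul_one]
    rw [show cs.rightInvSeq [b] = [cs.simple b] from by simp, cnt]
    simp
  | cons i μ ih =>
    intro b
    set q := cs.wordProd μ * cs.simple b * (cs.wordProd μ)⁻¹ with hqdef
    have hq2 : q * q = 1 := by
      rw [hqdef, show (cs.wordProd μ * cs.simple b * (cs.wordProd μ)⁻¹)
          * (cs.wordProd μ * cs.simple b * (cs.wordProd μ)⁻¹)
        = cs.wordProd μ * (cs.simple b * cs.simple b) * (cs.wordProd μ)⁻¹ by group,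
        cs.simple_mul_simple_self b]
      group
    have hqinv : q⁻¹ = q := by
      rw [eq_comm, eq_inv_iff_mul_eq_one]
      exact hq2
    have ht : cs.wordProd (i :: μ) * cs.simple b * (cs.wordProd (i :: μ))⁻¹
        = cs.simple i * q * cs.simple i := by
      rw [wordProd_cons, hqdef, mul_inv_rev, cs.inv_simple]
      group
    set t := cs.simple i * q * cs.simple i with htdef
    rw [ht]
    set inner := μ ++ b :: μ.reverse with hinner
    have hin : cs.wordProd inner = q := by
      rw [hinner, cs.wordProd_append, wordProd_cons, cs.wordProd_reverse, hqdef]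
      group
    have hsplit : (i :: μ) ++ b :: (i :: μ).reverse = i :: (inner ++ [i]) := by
      simp [hinner]
    rw [hsplit]
    have h1 : cs.rightInvSeq (i :: (inner ++ [i]))
        = ((cs.wordProd (inner ++ [i]))⁻¹ * cs.simple i * cs.wordProd (inner ++ [i]))
            :: cs.rightInvSeq (inner ++ [i]) := rfl
    have h2 : cs.rightInvSeq (inner ++ [i])
        = (cs.rightInvSeq inner).map
            (fun E => cs.simple i * E * cs.simple i) ++ [cs.simple i] := by
      rw [ris_append]
      congr 1
      · apply List.map_congr_left
        intro E _
        rw [cs.wordProd_singleton, cs.inv_simple]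
      · simp
    have hpin : cs.wordProd (inner ++ [i]) = q * cs.simple i := by
      rw [cs.wordProd_append, cs.wordProd_singleton, hin]
    rw [h1, h2]
    have hh1 : (cs.wordProd (inner ++ [i]))⁻¹ * cs.simple i * cs.wordProd (inner ++ [i])
        = t * (q * cs.simple i) := by
      rw [hpin, mul_inv_rev, cs.inv_simple, hqinv, htdef]
    have hcond1 : ∀ u : W, (t * u = t) = (u = 1) := by
      intro u
      apply propext; constructor
      · intro h
        nth_rewrite 2 [← mul_one t] at h
        exact mul_left_cancel h
      · intro h; rw [h, mul_one]
    have hheadc : ((cs.wordProd (inner ++ [i]))⁻¹ * cs.simple i * cs.wordProd (inner ++ [i]) = t)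
        = (q * cs.simple i = 1) := by
      rw [hh1, hcond1]
    have hlastc : (cs.simple i = t) = (q * cs.simple i = 1) := by
      apply propext
      rw [htdef]
      constructor
      · intro h
        have h' : cs.simple i * 1 = cs.simple i * (q * cs.simple i) := by
          rw [mul_one]
          nth_rewrite 1 [h]
          group
        rw [← mul_left_cancel h']
      · intro h
        have h' : q = cs.simple i := by
          rw [← cs.inv_simple, eq_inv_iff_mul_eq_one]
          exact h
        rw [h', cs.simple_mul_simple_self i, one_mul]
    have hmapc : ∀ E : W, (cs.simple i * E * cs.simple i = t) = (E = q) := by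
      intro E
      apply propext
      rw [htdef]
      constructor
      · intro h
        exact mul_left_cancel (mul_right_cancel h)
      · intro h; rw [h]
    -- assemble
    rw [cnt, List.countP_cons, List.countP_append, List.countP_map]
    have hmapcnt : List.countP ((fun x => decide (x = t)) ∘ fun E => cs.simple i * E * cs.simple i)
        (cs.rightInvSeq inner) = cnt q (cs.rightInvSeq inner) := by
      rw [cnt]
      apply List.countP_congr
      intro E _
      simp only [Function.comp_apply, decide_eq_decide]
      rw [hmapc E]
    rw [hmapcnt]
    have hsing : List.countP (fun x => decide (x = t)) [cs.simple i]
        = (if q * cs.simple i = 1 then 1 else 0) := by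
      simp only [List.countP_singleton, decide_eq_true_eq]
      rw [← hlastc]
    rw [hsing]
    have hheadn : (if (fun x => decide (x = t))
          ((cs.wordProd (inner ++ [i]))⁻¹ * cs.simple i * cs.wordProd (inner ++ [i])) = true
        then 1 else 0) = (if q * cs.simple i = 1 then 1 else 0) := by
      simp only [decide_eq_true_eq]
      rw [hheadc]
    rw [hheadn]
    have ihq := ih b
    rw [← hqdef, ← hinner, cnt] at ihq
    push_cast
    rw [add_assoc, CharTwo.add_self_eq_zero, add_zero]
    exact ihq

open Classical in
theorem mem_ris_of_isRightInversion {ω : List B} {t : W}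
    (h : cs.IsRightInversion (cs.wordProd ω) t) : t ∈ cs.rightInvSeq ω := by
  classical
  obtain ⟨⟨v, b, hvb⟩, hlen⟩ := h
  have htrefl : cs.IsReflection t := ⟨v, b, hvb⟩
  obtain ⟨ρv, _, hρv⟩ := cs.exists_reduced_word' v
  set ρt := ρv ++ b :: ρv.reverse with hρt
  have hπρt : cs.wordProd ρt = t := by
    rw [hρt, cs.wordProd_append, wordProd_cons, cs.wordProd_reverse, ← hρv, hvb]
    group
  obtain ⟨ω', hω'red, hω'⟩ := cs.exists_reduced_word' (cs.wordProd ω * t)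
  have hprod : cs.wordProd (ω' ++ ρt) = cs.wordProd ω := by
    rw [cs.wordProd_append, hπρt, ← hω', mul_assoc, htrefl.mul_self, mul_one]
  have hpar := parity_invariant cs hprod.symm t
  -- compute count in ω' ++ ρt
  have happ := ris_append cs ω' ρt
  have hconjc : ∀ E : W, ((cs.wordProd ρt)⁻¹ * E * cs.wordProd ρt = t) = (E = t) := by
    intro E
    rw [hπρt]
    apply propext
    constructor
    · intro h
      have h2 : t * (t⁻¹ * E * t) * t⁻¹ = t * t * t⁻¹ := by rw [h]
      calc E = t * (t⁻¹ * E * t) * t⁻¹ := by group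
        _ = t * t * t⁻¹ := h2
        _ = t := by group
    · intro h; rw [h]; group
  have hmapcnt : List.countP (fun x => decide (x = t))
      ((cs.rightInvSeq ω').map (fun E => (cs.wordProd ρt)⁻¹ * E * cs.wordProd ρt))
      = cnt t (cs.rightInvSeq ω') := by
    rw [List.countP_map, cnt]
    apply List.countP_congr
    intro E _
    simp only [Function.comp_apply, decide_eq_decide]
    rw [hconjc E]
  have hcnt0 : cnt t (cs.rightInvSeq ω') = 0 := by
    rw [cnt, List.countP_eq_zero]
    intro E hE
    simp only [decide_eq_true_eq]
    intro hEt
    rw [hEt] at hE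
    have hri := cs.isRightInversion_of_mem_rightInvSeq hω'red hE
    rw [← hω'] at hri
    have h3 : cs.wordProd ω * t * t = cs.wordProd ω := by
      rw [mul_assoc, htrefl.mul_self, mul_one]
    have h4 := hri.2
    rw [h3] at h4
    omega
  have hpal : ((cnt t (cs.rightInvSeq ρt) : ℕ) : ZMod 2) = 1 := by
    have := palindrome_odd cs ρv b
    rw [← hρv, ← hvb] at this
    exact this
  have hcount : ((cnt t (cs.rightInvSeq ω) : ℕ) : ZMod 2) = 1 := by
    rw [hpar, happ, cnt, List.countP_append, hmapcnt, hcnt0]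
    push_cast
    rw [zero_add]
    exact hpal
  have hne : cnt t (cs.rightInvSeq ω) ≠ 0 := by
    intro h0
    rw [h0] at hcount
    simp at hcount
  have hpos : 0 < List.countP (fun x => decide (x = t)) (cs.rightInvSeq ω) :=
    Nat.pos_of_ne_zero hne
  obtain ⟨E, hE, hEt⟩ := List.countP_pos_iff.mp hpos
  simp only [decide_eq_true_eq] at hEt
  rwa [hEt] at hE

open Classical in
theorem exchange {ω : List B} {b : B}
    (h : cs.length (cs.wordProd ω * cs.simple b) < cs.length (cs.wordProd ω)) :
    ∃ j, j < ω.length ∧ cs.wordProd ω * cs.simple b = cs.wordProd (ω.eraseIdx j)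
      ∧ (cs.rightInvSeq ω).getD j 1 = cs.simple b := by
  have hmem : cs.simple b ∈ cs.rightInvSeq ω :=
    mem_ris_of_isRightInversion cs ⟨cs.isReflection_simple b, h⟩
  obtain ⟨j, hj, hgetE⟩ := List.mem_iff_getElem.mp hmem
  have hjlen : j < ω.length := by
    rw [← cs.length_rightInvSeq ω]; exact hj
  have hgetD : (cs.rightInvSeq ω).getD j 1 = cs.simple b := by
    rw [List.getD_eq_getElem _ 1 hj, hgetE]
  refine ⟨j, hjlen, ?_, hgetD⟩
  rw [← cs.wordProd_mul_getD_rightInvSeq ω j, hgetD]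



-- Part 3: deletion and support lemmas
section Part3

variable {B : Type*} [Fintype B] {W : Type*} [Group W] {M : CoxeterMatrix B}
  (cs : CoxeterSystem M W)

open Classical in
/-- Deletion: every word contains a reduced word for the same element using only
its own letters. -/
theorem deletion (ω : List B) : ∃ ν : List B, cs.IsReduced ν ∧
    cs.wordProd ν = cs.wordProd ω ∧ ∀ x ∈ ν, x ∈ ω := by
  classical
  induction ω using List.reverseRecOn with
  | nil =>
    refine ⟨[], ?_, rfl, by simp⟩
    simp [CoxeterSystem.IsReduced]
  | append_singleton κ b ih =>
    obtain ⟨ν, hνred, hνprod, hνsub⟩ := ih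
    rcases cs.length_mul_simple (cs.wordProd ν) b with hup | hdown
    · refine ⟨ν ++ [b], ?_, ?_, ?_⟩
      · rw [CoxeterSystem.IsReduced, cs.wordProd_append, cs.wordProd_singleton, hup,
          List.length_append, List.length_singleton]
        rw [hνred]
      · rw [cs.wordProd_append, cs.wordProd_singleton, hνprod, cs.wordProd_append,
          cs.wordProd_singleton]
      · intro x hx
        rcases List.mem_append.mp hx with h | h
        · exact List.mem_append.mpr (Or.inl (hνsub x h))
        · exact List.mem_append.mpr (Or.inr h)
    · have hlt : cs.length (cs.wordProd ν * cs.simple b) < cs.length (cs.wordProd ν) := by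
        omega
      obtain ⟨j, hj, heq, -⟩ := exchange cs hlt
      refine ⟨ν.eraseIdx j, ?_, ?_, ?_⟩
      · rw [CoxeterSystem.IsReduced, ← heq]
        have h1 : (ν.eraseIdx j).length = ν.length - 1 := by
          rw [List.length_eraseIdx]
          simp [hj]
        rw [h1, ← hνred]
        omega
      · rw [← heq, hνprod, cs.wordProd_append, cs.wordProd_singleton]
      · intro x hx
        have := (List.eraseIdx_sublist ν j).mem hx
        exact List.mem_append.mpr (Or.inl (hνsub x this))

open Classical in
theorem mem_of_getD_ris {ω : List B} {j : ℕ} {k : B} (hj : j < ω.length)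
    (h : (cs.rightInvSeq ω).getD j 1 = cs.simple k) : k ∈ ω := by
  classical
  have hget := cs.getD_rightInvSeq ω j
  rw [h] at hget
  have hget? : ω[j]? = some (ω[j]) := by
    rw [List.getElem?_eq_getElem hj]
  rw [hget?] at hget
  simp only [Option.map_some, Option.getD_some] at hget
  set d := ω.drop (j+1) with hd
  have hword : cs.simple k = cs.wordProd (d.reverse ++ ω[j] :: d) := by
    rw [cs.wordProd_append, CoxeterSystem.wordProd_cons, cs.wordProd_reverse, hget]
    group
  obtain ⟨ν, hνred, hνprod, hνsub⟩ := deletion cs (d.reverse ++ ω[j] :: d)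
  rw [← hword] at hνprod
  have hν1 : ν.length = 1 := by
    have h1 : cs.length (cs.wordProd ν) = ν.length := hνred
    rw [hνprod, cs.length_simple] at h1
    omega
  obtain ⟨y, rfl⟩ := List.length_eq_one_iff.mp hν1
  rw [cs.wordProd_singleton] at hνprod
  have hyk : y = k := Stmt16Aux.simple_inj cs hνprod
  have hymem := hνsub y (by simp)
  rw [hyk] at hymem
  rcases List.mem_append.mp hymem with hmem | hmem
  · exact List.mem_of_mem_drop (List.mem_reverse.mp hmem)
  · rcases List.mem_cons.mp hmem with hh | hh
    · rw [hh]; exact List.getElem_mem hj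
    · exact List.mem_of_mem_drop hh

open Classical in
theorem support_subset : ∀ (n : ℕ) (ω' : List B), ω'.length = n → cs.IsReduced ω' →
    ∀ ω : List B, cs.wordProd ω = cs.wordProd ω' → ∀ x ∈ ω', x ∈ ω := by
  classical
  intro n
  induction n with
  | zero =>
    intro ω' hlen _ ω _ x hx
    rw [List.length_eq_zero_iff] at hlen
    subst hlen
    simp at hx
  | succ n ih =>
    intro ω' hlen hred ω hprod x hx
    have hne : ω' ≠ [] := by
      intro h; rw [h] at hlen; simp at hlen
    set k := ω'.getLast hne with hk
    set κ := ω'.dropLast with hκ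
    have hsplit : κ ++ [k] = ω' := List.dropLast_append_getLast hne
    have hκlen : κ.length = n := by
      have := congrArg List.length hsplit
      rw [List.length_append, List.length_singleton, hlen] at this
      omega
    have hκred : cs.IsReduced κ := by
      have htake : ω'.take n = κ := by
        rw [← hsplit, List.take_left' hκlen]
      rw [← htake]
      exact hred.take n
    have hprodsplit : cs.wordProd ω' = cs.wordProd κ * cs.simple k := by
      rw [← hsplit, cs.wordProd_append, cs.wordProd_singleton]
    have hcancel : cs.wordProd ω * cs.simple k = cs.wordProd κ := by
      rw [hprod, hprodsplit, mul_assoc, cs.simple_mul_simple_self, mul_one]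
    have hdesc : cs.length (cs.wordProd ω * cs.simple k) < cs.length (cs.wordProd ω) := by
      have h1 : cs.length (cs.wordProd κ) = κ.length := hκred
      have h2 : cs.length (cs.wordProd ω') = ω'.length := hred
      rw [hcancel, hprod, h1, h2, hκlen, hlen]
      omega
    obtain ⟨j, hj, heq, hgetD⟩ := exchange cs hdesc
    have hkmem : k ∈ ω := mem_of_getD_ris cs hj hgetD
    have hxsplit : x ∈ κ ∨ x = k := by
      rw [← hsplit] at hx
      rcases List.mem_append.mp hx with h | h
      · exact Or.inl h
      · exact Or.inr (List.mem_singleton.mp h)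
    rcases hxsplit with hxκ | hxk
    · have hprod2 : cs.wordProd (ω.eraseIdx j) = cs.wordProd κ := by
        rw [← heq, hcancel]
      have := ih κ hκlen hκred (ω.eraseIdx j) hprod2 x hxκ
      exact (List.eraseIdx_sublist ω j).mem this
    · rw [hxk]; exact hkmem

end Part3

end Stmt16Aux2

-- Part 4: word building for the main theorem

/-- `sigmaWordAux σB l i` is the word `l ++ σ(l) ++ ⋯ ++ σ^{i-1}(l)` (as
`l ++ (previous word mapped by σ)`). -/
def sigmaWordAux {B : Type*} (σB : Equiv.Perm B) (l : List B) : ℕ → List B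
  | 0 => []
  | (i+1) => l ++ (sigmaWordAux σB l i).map σB





open Classical in
/-- Let `c` be a `σ`-Coxeter element given by the reduced word `l` whose
letters represent the `σ`-orbits on `Δ`, let `a = α_j` be one of these letters, and let
`δ` be the size of its `σ`-orbit.  Then for each `0 ≤ i ≤ δ-1` one can write
`(cσ)^i = u_i σ^i` with `u_i = c·σ(c)⋯σ^{i-1}(c)`, and the simple reflection
`s_{σ^i(α_j)}` does not occur in any reduced expression of `u_i`. -/
theorem stmt16 {B : Type*} [Fintype B] {W : Type*} [Group W]
    {M : CoxeterMatrix B} (cs : CoxeterSystem M W)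
    (σB : Equiv.Perm B) (σW : W ≃* W)
    (hσ : ∀ i, σW (cs.simple i) = cs.simple (σB i))
    (l : List B) (hlred : cs.IsReduced l)
    (hlorb : ∀ j : B, l.countP (fun i => decide (SameOrbit σB i j)) = 1)
    (c : W) (hc : c = cs.wordProd l)
    (a : B) (ha : a ∈ l)
    -- δ is the size of the σ-orbit of a
    (δ : ℕ) (hδpos : 0 < δ) (hδret : (σB ^ δ) a = a)
    (hδ : ∀ t < δ, ∀ t' < δ, (σB ^ t) a = (σB ^ t') a → t = t') :
    ∀ i < δ, ∃ u : W,
      -- (cσ)^i = u σ^i in the holomorph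
      (∀ w : W, (fun v => c * σW v)^[i] w = u * ((σW ^ i : W ≃* W) w)) ∧
      -- s_{σ^i(a)} does not occur in any reduced expression of u
      (∀ l' : List B, cs.IsReduced l' → cs.wordProd l' = u → (σB ^ i) a ∉ l') := by
  classical
  intro i hi
  have hmap : ∀ m : List B, cs.wordProd (m.map σB) = σW (cs.wordProd m) := by
    intro m
    induction m with
    | nil => simp
    | cons x m ihm =>
      rw [List.map_cons, CoxeterSystem.wordProd_cons, CoxeterSystem.wordProd_cons, map_mul,
        hσ, ihm]
  have hiter : ∀ n : ℕ, ∀ w : W, (fun v => c * σW v)^[n] w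
      = cs.wordProd (sigmaWordAux σB l n) * ((σW ^ n : W ≃* W) w) := by
    intro n
    induction n with
    | zero =>
      intro w
      rw [Function.iterate_zero, pow_zero]
      show w = cs.wordProd [] * (1 : W ≃* W) w
      rw [CoxeterSystem.wordProd_nil, one_mul]
      rfl
    | succ n ihn =>
      intro w
      rw [Function.iterate_succ_apply', ihn w]
      show c * σW (cs.wordProd (sigmaWordAux σB l n) * (σW ^ n : W ≃* W) w) = _
      rw [map_mul]
      have h1 : cs.wordProd (sigmaWordAux σB l (n+1))
          = c * σW (cs.wordProd (sigmaWordAux σB l n)) := by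
        show cs.wordProd (l ++ (sigmaWordAux σB l n).map σB) = _
        rw [cs.wordProd_append, hmap, hc]
      have h2 : (σW ^ (n+1) : W ≃* W) w = σW ((σW ^ n : W ≃* W) w) := by
        rw [pow_succ']; rfl
      rw [h1, h2, mul_assoc]
  have hmem : ∀ n : ℕ, ∀ x ∈ sigmaWordAux σB l n, ∃ t < n, ∃ b ∈ l, x = (σB ^ t) b := by
    intro n
    induction n with
    | zero => intro x hx; simp [sigmaWordAux] at hx
    | succ n ihn =>
      intro x hx
      rcases List.mem_append.mp hx with h | h
      · exact ⟨0, Nat.succ_pos n, x, h, by simp⟩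
      · obtain ⟨y, hy, hyx⟩ := List.mem_map.mp h
        obtain ⟨t, ht, b, hb, rfl⟩ := ihn y hy
        refine ⟨t+1, by omega, b, hb, ?_⟩
        rw [← hyx, pow_succ']
        rfl
  have hnotmem : (σB ^ i) a ∉ sigmaWordAux σB l i := by
    intro hmem'
    obtain ⟨t, ht, b', hb', heq⟩ := hmem i _ hmem'
    have hsplit : (σB ^ i) a = (σB ^ t) ((σB ^ (i - t)) a) := by
      conv_lhs => rw [show i = t + (i - t) by omega]
      rw [pow_add, Equiv.Perm.mul_apply]
    rw [hsplit] at heq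
    have hba : (σB ^ (i - t)) a = b' := (Equiv.injective _) heq
    have horb : SameOrbit σB b' a := by
      refine ⟨-((i - t : ℕ) : ℤ), ?_⟩
      rw [zpow_neg, zpow_natCast, ← hba]
      exact Equiv.symm_apply_apply _ _
    have horba : SameOrbit σB a a := ⟨0, by simp⟩
    have hb'a : b' = a := by
      by_contra hne
      have hcard := hlorb a
      rw [List.countP_eq_length_filter] at hcard
      have hain : a ∈ l.filter (fun x => decide (SameOrbit σB x a)) :=
        List.mem_filter.mpr ⟨ha, decide_eq_true horba⟩
      have hbin : b' ∈ l.filter (fun x => decide (SameOrbit σB x a)) :=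
        List.mem_filter.mpr ⟨hb', decide_eq_true horb⟩
      have hsub : ({b', a} : Finset B)
          ⊆ (l.filter (fun x => decide (SameOrbit σB x a))).toFinset := by
        intro x hx
        rcases Finset.mem_insert.mp hx with rfl | hx
        · exact List.mem_toFinset.mpr hbin
        · rw [Finset.mem_singleton.mp hx]
          exact List.mem_toFinset.mpr hain
      have h2le : 2 ≤ (l.filter (fun x => decide (SameOrbit σB x a))).toFinset.card := by
        rw [← Finset.card_pair hne]
        exact Finset.card_le_card hsub
      have h3 := List.toFinset_card_le (l.filter (fun x => decide (SameOrbit σB x a)))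
      omega
    rw [hb'a] at hba
    have := hδ (i - t) (by omega) 0 hδpos (by rw [pow_zero]; simpa using hba)
    omega
  refine ⟨cs.wordProd (sigmaWordAux σB l i), fun w => hiter i w, ?_⟩
  intro l' hl'red hl'prod hmem'
  exact hnotmem (Stmt16Aux2.support_subset cs l'.length l' rfl hl'red
    (sigmaWordAux σB l i) hl'prod.symm _ hmem')
end
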